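/- arXiv:1912.05136 — 9 statements merged into one kernel-verified Lean document; each statement's English description precedes it below -/
import Mathlib

section
/- Let E be a graph and let p = (e₁,…,e_n) be a path of length n ≥ 2 in E. If there exists a permutation σ of {1,…,n} with σ ≠ id such that (e_{σ(1)},…,e_{σ(n)}) is again a path in E, then E contains a loop. -/
/-
Without loops, an edge `p a` of a path can only be followed by `p (a + 1)`: if `t (p a) = s (p b)`
then either the segment `p b, …, p a` or the segment `p (a + 1), …, p (b - 1)` is a loop.
A rearrangement of the path therefore has to satisfy `σ (i + 1) = σ i + 1`, which forces `σ = 1`.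
-/

/-- A directed graph (quiver): a set of vertices, a set of edges, and
source/target maps. -/
structure DGraph where
  V : Type
  E : Type
  s : E → V
  t : E → V

/-- `p : Fin k → G.E` is a path of length `k` iff consecutive edges are composable. -/
def DGraph.IsPath (G : DGraph) {k : ℕ} (p : Fin k → G.E) : Prop :=
  ∀ (i : ℕ) (h : i + 1 < k), G.t (p ⟨i, Nat.lt_of_succ_lt h⟩) = G.s (p ⟨i + 1, h⟩)

/-- A graph has a loop iff it admits a path of positive length whose source
equals its target. -/
def DGraph.HasLoop (G : DGraph) : Prop :=
  ∃ (k : ℕ) (p : Fin (k + 1) → G.E), G.IsPath p ∧ G.s (p 0) = G.t (p (Fin.last k))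

namespace DGraph.IsPath

variable {G : DGraph} {n : ℕ} {p : Fin n → G.E}

theorem hasLoop_of_s_eq_t (hp : G.IsPath p) {a b : Fin n} (hab : a ≤ b)
    (h : G.s (p a) = G.t (p b)) : G.HasLoop := by
  refine ⟨b - a, fun j => p ⟨a + j, by omega⟩, fun i hi => ?_, ?_⟩
  · simpa only [Nat.add_assoc] using hp (a + i) (by omega)
  · convert h using 3 <;> ext <;> simp only [Fin.val_zero, Fin.val_last] <;> omega

theorem val_eq_succ_of_t_eq_s (hp : G.IsPath p) (hG : ¬G.HasLoop) {a b : Fin n}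
    (h : G.t (p a) = G.s (p b)) : (b : ℕ) = a + 1 := by
  by_contra hne
  rcases Nat.lt_or_gt_of_ne hne with hba | hab
  · exact hG (hp.hasLoop_of_s_eq_t (Fin.le_iff_val_le_val.2 (by omega)) h.symm)
  · have hnext : G.t (p a) = G.s (p ⟨a + 1, by omega⟩) := hp a (by omega)
    have hprev : G.t (p ⟨b - 1, by omega⟩) = G.s (p b) := by
      simpa only [Nat.sub_add_cancel (by omega : 1 ≤ (b : ℕ))] using hp (b - 1) (by omega)
    exact hG (hp.hasLoop_of_s_eq_t (Fin.le_iff_val_le_val.2 (by dsimp only; omega))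
      (hnext.symm.trans (h.trans hprev.symm)))

end DGraph.IsPath

theorem Fin.eq_id_of_val_succ {n : ℕ} {f : Fin n → Fin n}
    (hf : ∀ (i : ℕ) (h : i + 1 < n), (f ⟨i + 1, h⟩ : ℕ) = f ⟨i, Nat.lt_of_succ_lt h⟩ + 1) :
    f = id := by
  funext x
  have hpos : 0 < n := x.pos
  have hshift : ∀ (i : ℕ) (hi : i < n), (f ⟨i, hi⟩ : ℕ) = f ⟨0, hpos⟩ + i := by
    intro i
    induction i with
    | zero => intro _; rfl
    | succ j ih => intro hi; rw [hf j hi, ih]; omega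
  have hzero : (f ⟨0, hpos⟩ : ℕ) = 0 := by
    have := hshift (n - 1) (by omega)
    have := (f ⟨n - 1, by omega⟩).isLt
    omega
  ext
  simpa [hzero] using hshift x x.isLt

theorem stmt_1_general (G : DGraph) (n : ℕ) (p : Fin n → G.E)
    (hp : G.IsPath p) (σ : Equiv.Perm (Fin n)) (hσ : σ ≠ Equiv.refl (Fin n))
    (hpσ : G.IsPath (p ∘ σ)) : G.HasLoop := by
  by_contra hG
  have hid : ⇑σ = id := Fin.eq_id_of_val_succ fun i hi => hp.val_eq_succ_of_t_eq_s hG (hpσ i hi)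
  exact hσ (Equiv.ext (congrFun hid))

/-- if the edges of a path of length at least 2 can be rearranged by a
non-identity permutation into a path, then the graph contains a loop. -/
theorem stmt_1 (G : DGraph) (n : ℕ) (hn : 2 ≤ n) (p : Fin n → G.E)
    (hp : G.IsPath p) (σ : Equiv.Perm (Fin n)) (hσ : σ ≠ Equiv.refl (Fin n))
    (hpσ : G.IsPath (p ∘ σ)) : G.HasLoop :=
  stmt_1_general G n p hp σ hσ hpσ
end

section
/- Let E be a graph with exactly N edges and no loops, and let 1 ≤ k ≤ N. Then the edges of any path in E are pairwise distinct, and the number of distinct paths of length k in E is at most the binomial coefficient C(N, k). -/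
/-- `e` strictly precedes `f`: there is a path of length ≥ 2 starting with `e`, ending with `f`. -/
def DGraph.Prec (G : DGraph) (e f : G.E) : Prop :=
  ∃ (m : ℕ) (r : Fin (m + 2) → G.E), G.IsPath r ∧ r 0 = e ∧ r (Fin.last (m + 1)) = f

lemma DGraph.prec_irrefl (G : DGraph) (hnl : ¬ G.HasLoop) (e : G.E) : ¬ G.Prec e e := by
  rintro ⟨m, r, hr, h0, hl⟩
  apply hnl
  refine ⟨m, fun a => r a.castSucc, ?_, ?_⟩
  · intro i h
    have := hr i (by omega)
    convert this using 3 <;> simp [Fin.castSucc, Fin.castAdd, Fin.castLE]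
  · have h1 : G.t ((fun a : Fin (m+1) => r a.castSucc) (Fin.last m)) = G.s (r (Fin.last (m+1))) := by
      have := hr m (by omega)
      convert this using 3 <;> simp [Fin.castSucc, Fin.castAdd, Fin.castLE, Fin.last]
    have h2 : (fun a : Fin (m+1) => r a.castSucc) 0 = e := by
      show r ((0 : Fin (m+1)).castSucc) = e
      rw [Fin.castSucc_zero]; exact h0
    rw [h2, h1, hl]

lemma DGraph.prec_trans (G : DGraph) {e f g : G.E} (h1 : G.Prec e f) (h2 : G.Prec f g) :
    G.Prec e g := by
  obtain ⟨m, r, hr, hr0, hrl⟩ := h1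
  obtain ⟨n, u, hu, hu0, hul⟩ := h2
  refine ⟨m + n + 1, fun a => if h : a.val ≤ m + 1 then r ⟨a.val, by omega⟩
      else u ⟨a.val - (m + 1), by omega⟩, ?_, ?_, ?_⟩
  · intro i h
    by_cases hi : i + 1 ≤ m + 1
    · simp only [show i ≤ m + 1 by omega, hi, dif_pos]
      exact hr i (by omega)
    · by_cases hi2 : i ≤ m + 1
      · have : i = m + 1 := by omega
        subst this
        simp only [hi2, dif_pos, dif_neg (by omega : ¬ (m + 1 + 1 ≤ m + 1))]
        have hval : (⟨m + 1, by omega⟩ : Fin (m+2)) = Fin.last (m+1) := rfl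
        rw [hval, hrl, ← hu0]
        have heq : (⟨m + 1 + 1 - (m + 1), by omega⟩ : Fin (n+2)) = ⟨0 + 1, by omega⟩ :=
          Fin.ext (by simp)
        rw [heq]
        exact hu 0 (by omega)
      · simp only [dif_neg hi2, dif_neg (by omega : ¬ (i + 1 ≤ m + 1))]
        have heq : (⟨i + 1 - (m + 1), by omega⟩ : Fin (n+2)) =
            ⟨i - (m + 1) + 1, by omega⟩ := Fin.ext (by simp; omega)
        rw [heq]
        exact hu (i - (m + 1)) (by omega)
  · simpa using hr0
  · have hlt : ¬ ((Fin.last (m + n + 1 + 1)).val ≤ m + 1) := by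
      rw [Fin.val_last]; omega
    simp only [dif_neg hlt]
    rw [← hul]
    exact congrArg u (Fin.ext (by simp [Fin.last]; omega))

lemma DGraph.prec_of_path (G : DGraph) {m : ℕ} {p : Fin m → G.E} (hp : G.IsPath p)
    {i j : ℕ} (hij : i < j) (hj : j < m) : G.Prec (p ⟨i, by omega⟩) (p ⟨j, hj⟩) := by
  refine ⟨j - i - 1, fun a => p ⟨i + a.val, by omega⟩, ?_, ?_, ?_⟩
  · intro a h
    show G.t (p ⟨i + a, by omega⟩) = G.s (p ⟨i + (a + 1), by omega⟩)
    have heq : (⟨i + (a + 1), by omega⟩ : Fin m) = ⟨i + a + 1, by omega⟩ :=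
      Fin.ext (by simp [Nat.add_assoc])
    rw [heq]
    exact hp (i + a) (by omega)
  · exact congrArg p (Fin.ext (by simp))
  · exact congrArg p (Fin.ext (by simp [Fin.last]; omega))

lemma DGraph.path_inj (G : DGraph) (hnl : ¬ G.HasLoop) {m : ℕ} {p : Fin m → G.E}
    (hp : G.IsPath p) : Function.Injective p := by
  intro a b hab
  by_contra hne
  wlog h : a < b generalizing a b
  · exact this hab.symm (Ne.symm hne) (by omega)
  · have hprec : G.Prec (p ⟨a.val, a.isLt⟩) (p ⟨b.val, b.isLt⟩) :=
      G.prec_of_path hp h b.isLt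
    rw [show (⟨a.val, a.isLt⟩ : Fin m) = a from rfl, show (⟨b.val, b.isLt⟩ : Fin m) = b from rfl,
      ← hab] at hprec
    exact G.prec_irrefl hnl _ hprec

/-- in a graph with exactly N edges and no loops, the edges of any path
are pairwise distinct, and for 1 ≤ k ≤ N there are at most C(N,k) paths of length k. -/
theorem stmt_2 (G : DGraph) (N k : ℕ) (hE : Nat.card G.E = N)
    (hnl : ¬ G.HasLoop) (hk : 1 ≤ k) (hkN : k ≤ N) :
    (∀ (m : ℕ) (p : Fin m → G.E), G.IsPath p → Function.Injective p) ∧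
    Nat.card { p : Fin k → G.E // G.IsPath p } ≤ N.choose k := by
  classical
  have inj : ∀ (m : ℕ) (p : Fin m → G.E), G.IsPath p → Function.Injective p :=
    fun m p hp => G.path_inj hnl hp
  refine ⟨inj, ?_⟩
  have hfin : Finite G.E := by
    rcases finite_or_infinite G.E with h | h
    · exact h
    · rw [Nat.card_eq_zero_of_infinite] at hE; omega
  haveI := Fintype.ofFinite G.E
  have hcard : Fintype.card G.E = N := by
    rw [← Nat.card_eq_fintype_card, hE]
  -- injection into k-subsets
  set Φ : { p : Fin k → G.E // G.IsPath p } → { s : Finset G.E // s.card = k } :=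
    fun p => ⟨Finset.univ.image p.1, by
      rw [Finset.card_image_of_injective _ (inj k p.1 p.2), Finset.card_univ,
        Fintype.card_fin]⟩ with hΦ
  have hΦinj : Function.Injective Φ := by
    rintro ⟨p, hp⟩ ⟨q, hq⟩ hpq
    simp only [hΦ, Subtype.mk.injEq] at hpq ⊢
    by_contra hne
    have hex : ∃ n, ∃ h : n < k, p ⟨n, h⟩ ≠ q ⟨n, h⟩ := by
      obtain ⟨i, hi⟩ := Function.ne_iff.mp hne
      exact ⟨i.val, i.isLt, by simpa using hi⟩
    obtain ⟨hik, hneq⟩ := Nat.find_spec hex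
    set i := Nat.find hex with hidef
    have hmin : ∀ a (h : a < k), a < i → p ⟨a, h⟩ = q ⟨a, h⟩ := by
      intro a h ha
      have := Nat.find_min hex ha
      push_neg at this
      exact this h
    -- q i is in image of p
    have hq_mem : q ⟨i, hik⟩ ∈ Finset.univ.image p := by
      rw [hpq]; exact Finset.mem_image_of_mem q (Finset.mem_univ _)
    obtain ⟨j, _, hj⟩ := Finset.mem_image.mp hq_mem
    have hp_mem : p ⟨i, hik⟩ ∈ Finset.univ.image q := by
      rw [← hpq]; exact Finset.mem_image_of_mem p (Finset.mem_univ _)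
    obtain ⟨l, _, hl⟩ := Finset.mem_image.mp hp_mem
    have hji : i < j.val := by
      rcases lt_trichotomy j.val i with h | h | h
      · exfalso
        have : p j = q ⟨j.val, j.isLt⟩ := hmin j.val j.isLt h
        rw [this] at hj
        have h2 := inj k q hq hj
        rw [Fin.ext_iff] at h2
        simp only [] at h2
        omega
      · exfalso; apply hneq; rw [← hj]; congr 1; exact Fin.ext h.symm
      · exact h
    have hli : i < l.val := by
      rcases lt_trichotomy l.val i with h | h | h
      · exfalso
        have : p ⟨l.val, l.isLt⟩ = q l := hmin l.val l.isLt h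
        rw [← this] at hl
        have h2 := inj k p hp hl
        rw [Fin.ext_iff] at h2
        simp only [] at h2
        omega
      · exfalso; apply hneq; rw [← hl]; congr 1; exact Fin.ext h
      · exact h
    have h1 : G.Prec (p ⟨i, hik⟩) (q ⟨i, hik⟩) := by
      have := G.prec_of_path hp hji j.isLt
      rwa [show (⟨j.val, j.isLt⟩ : Fin k) = j from rfl, hj] at this
    have h2 : G.Prec (q ⟨i, hik⟩) (p ⟨i, hik⟩) := by
      have := G.prec_of_path hq hli l.isLt
      rwa [show (⟨l.val, l.isLt⟩ : Fin k) = l from rfl, hl] at this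
    exact G.prec_irrefl hnl _ (G.prec_trans h1 h2)
  calc Nat.card { p : Fin k → G.E // G.IsPath p }
      ≤ Nat.card { s : Finset G.E // s.card = k } := Nat.card_le_card_of_injective Φ hΦinj
    _ = N.choose k := by
        rw [Nat.card_eq_fintype_card]
        rw [← hcard]
        exact Fintype.card_finset_len k
end

section
/- Let E be a graph with exactly N edges, where N ≥ 2, and with no loops. Then there are at most two distinct paths of length N − 1 in E. -/
namespace Stmt3Aux

variable {G : DGraph}

/-- vertex sequence of a path -/
def vtx {n : ℕ} (p : Fin n → G.E) (hn : 0 < n) (i : ℕ) : G.V :=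
  if h : i < n then G.s (p ⟨i, h⟩) else G.t (p ⟨n - 1, by omega⟩)

lemma vtx_lt {n : ℕ} (p : Fin n → G.E) (hn : 0 < n) {i : ℕ} (h : i < n) :
    vtx p hn i = G.s (p ⟨i, h⟩) := dif_pos h

lemma vtx_succ {n : ℕ} (p : Fin n → G.E) (hn : 0 < n) (hp : G.IsPath p) {i : ℕ} (h : i < n) :
    vtx p hn (i + 1) = G.t (p ⟨i, h⟩) := by
  by_cases h2 : i + 1 < n
  · rw [vtx, dif_pos h2]
    exact (hp i h2).symm
  · rw [vtx, dif_neg h2]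
    have : i = n - 1 := by omega
    subst this
    rfl

/-- loop builder with mk-indices -/
lemma mkloop (hnl : ¬ G.HasLoop) {k : ℕ} (c : Fin (k + 1) → G.E) (hc : G.IsPath c)
    (he : G.s (c ⟨0, by omega⟩) = G.t (c ⟨k, by omega⟩)) : False := by
  apply hnl
  refine ⟨k, c, hc, ?_⟩
  have h0 : (0 : Fin (k + 1)) = ⟨0, by omega⟩ := rfl
  have hl : (Fin.last k) = ⟨k, by omega⟩ := rfl
  rw [h0, hl]
  exact he

lemma noloop_st {n : ℕ} (hnl : ¬ G.HasLoop) (p : Fin n → G.E) (hp : G.IsPath p)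
    {i j : ℕ} (hij : i ≤ j) (hj : j < n) :
    G.s (p ⟨i, by omega⟩) ≠ G.t (p ⟨j, hj⟩) := by
  intro h
  have hk : j - i + 1 = j - i + 1 := rfl
  apply mkloop hnl (k := j - i) (fun l => p ⟨i + l, by have := l.isLt; omega⟩)
  · intro x hx
    exact hp (i + x) (by omega)
  · simp only []
    refine h.trans ?_
    have he2 : (⟨j, hj⟩ : Fin n) = ⟨i + (j - i), by omega⟩ :=
      Fin.ext (by show j = i + (j - i); omega)
    rw [he2]

lemma vtx_inj {n : ℕ} (hnl : ¬ G.HasLoop) (hn : 0 < n) {p : Fin n → G.E} (hp : G.IsPath p)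
    {i j : ℕ} (hi : i ≤ n) (hj : j ≤ n) (h : vtx p hn i = vtx p hn j) : i = j := by
  have key : ∀ (i j : ℕ), i < j → j ≤ n → vtx p hn i ≠ vtx p hn j := by
    intro i j hij hjn he
    have h1 : vtx p hn i = G.s (p ⟨i, by omega⟩) := vtx_lt p hn (by omega)
    have h2 : vtx p hn j = G.t (p ⟨j - 1, by omega⟩) := by
      have := vtx_succ p hn hp (i := j - 1) (by omega)
      rw [show j - 1 + 1 = j by omega] at this
      exact this
    rw [h1, h2] at he
    exact noloop_st hnl p hp (i := i) (j := j - 1) (by omega) (by omega) he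
  rcases lt_trichotomy i j with hlt | heq | hgt
  · exact absurd h (key i j hlt hj)
  · exact heq
  · exact absurd h.symm (key j i hgt hi)

lemma pcongr {n : ℕ} (p : Fin n → G.E) {i j : ℕ} {hi : i < n} {hj : j < n} (h : i = j) :
    p ⟨i, hi⟩ = p ⟨j, hj⟩ := by subst h; rfl

lemma noloop_a {n : ℕ} (hnl : ¬ G.HasLoop) (hn : 0 < n) {p : Fin n → G.E} (hp : G.IsPath p)
    (a : G.E) {i j : ℕ} (hij : i ≤ j) (hj : j ≤ n)
    (hta : G.t a = vtx p hn i) (hsa : G.s a = vtx p hn j) : False := by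
  rcases Nat.eq_or_lt_of_le hij with rfl | hlt
  · apply mkloop hnl (k := 0) (fun _ => a)
    · intro l hl
      omega
    · show G.s a = G.t a
      rw [hsa, hta]
  · -- i < j ≤ n
    apply mkloop hnl (k := j - i)
      (c := fun l => if h : (l : ℕ) = 0 then a else p ⟨i + l - 1, by have := l.isLt; omega⟩)
    · intro x hx
      by_cases hx0 : x = 0
      · subst hx0
        show G.t (if h : (0:ℕ) = 0 then a else _) = G.s (if h : (0+1:ℕ) = 0 then a else _)
        rw [dif_pos rfl, dif_neg (by omega : (0+1:ℕ) ≠ 0)]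
        rw [hta, vtx_lt p hn (show i < n by omega)]
        exact congrArg G.s (pcongr p (show i = i + (0+1) - 1 by omega))
      · show G.t (if h : (x:ℕ) = 0 then a else _) = G.s (if h : (x+1:ℕ) = 0 then a else _)
        rw [dif_neg hx0, dif_neg (by omega : (x+1:ℕ) ≠ 0)]
        have := hp (i + x - 1) (show i + x - 1 + 1 < n by omega)
        convert this using 2
        exact pcongr p (show i + (x+1) - 1 = i + x - 1 + 1 by omega)
    · show G.s (if h : (0:ℕ) = 0 then a else _) = G.t (if h : (j-i:ℕ) = 0 then a else _)
      rw [dif_pos rfl, dif_neg (by omega : (j-i:ℕ) ≠ 0)]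
      rw [hsa]
      have hv := vtx_succ p hn hp (i := j - 1) (by omega)
      rw [show j - 1 + 1 = j by omega] at hv
      rw [hv]
      exact congrArg G.t (pcongr p (show j - 1 = i + (j - i) - 1 by omega))

lemma classify (hnl : ¬ G.HasLoop) {n : ℕ} (hn : 0 < n) (p q : Fin n → G.E)
    (hp : G.IsPath p) (hq : G.IsPath q) (a : G.E)
    (ha : ∀ x : G.E, x = a ∨ ∃ c : Fin n, x = p c) :
    (∀ i : Fin n, q i = p i) ∨
    (∃ (m : ℕ) (hm : m < n), q ⟨m, hm⟩ = a ∧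
        ∀ (i : ℕ) (hi : i < n), i ≠ m → q ⟨i, hi⟩ = p ⟨i, hi⟩) ∨
    (q ⟨0, hn⟩ = a ∧ ∀ (i : ℕ) (hi : i < n), 0 < i → q ⟨i, hi⟩ = p ⟨i - 1, by omega⟩) ∨
    (q ⟨n - 1, by omega⟩ = a ∧
        ∀ (i : ℕ) (hi : i < n - 1), q ⟨i, by omega⟩ = p ⟨i + 1, by omega⟩) := by
  have qinj : ∀ (i j : ℕ) (hi : i < n) (hj : j < n), q ⟨i, hi⟩ = q ⟨j, hj⟩ → i = j := by
    intro i j hi hj h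
    apply vtx_inj hnl hn hq (by omega) (by omega)
    rw [vtx_lt q hn hi, vtx_lt q hn hj, h]
  have hstep : ∀ (i c d : ℕ) (h1 : i + 1 < n) (hc : c < n) (hd : d < n),
      q ⟨i, by omega⟩ = p ⟨c, hc⟩ → q ⟨i + 1, h1⟩ = p ⟨d, hd⟩ → d = c + 1 := by
    intro i c d h1 hc hd e1 e2
    have h3 : vtx p hn (c + 1) = vtx p hn d := by
      rw [vtx_succ p hn hp hc, vtx_lt p hn hd, ← e1, ← e2]
      exact hq i h1
    have := vtx_inj hnl hn hp (by omega) (by omega) h3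
    omega
  by_cases hA : ∃ (m : ℕ) (hm : m < n), q ⟨m, hm⟩ = a
  · obtain ⟨m, hm, hqm⟩ := hA
    have hqa : ∀ (i : ℕ) (hi : i < n), i ≠ m → q ⟨i, hi⟩ ≠ a := by
      intro i hi him h
      exact him (qinj i m hi hm (h.trans hqm.symm))
    have hcf0 : ∀ i : Fin n, ∃ (c : ℕ) (hc : c < n), ((i : ℕ) ≠ m → q i = p ⟨c, hc⟩) := by
      intro i
      by_cases him : (i : ℕ) = m
      · exact ⟨0, hn, fun h => absurd him h⟩
      · rcases ha (q i) with h | ⟨c, hcc⟩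
        · exact absurd h (hqa i.1 i.2 him)
        · exact ⟨c.1, c.2, fun _ => by rw [hcc]⟩
    choose cf hcf1 hcf2 using hcf0
    have lower : ∀ (i : ℕ) (hi : i < m), cf ⟨i, by omega⟩ = cf ⟨0, hn⟩ + i := by
      intro i
      induction i with
      | zero => intro hi; rfl
      | succ k ih =>
        intro hi
        have hk : k < m := by omega
        have := hstep k (cf ⟨k, by omega⟩) (cf ⟨k + 1, by omega⟩) (by omega) (hcf1 _) (hcf1 _)
          (hcf2 ⟨k, by omega⟩ (show k ≠ m by omega)) (hcf2 ⟨k + 1, by omega⟩ (show k + 1 ≠ m by omega))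
        rw [this, ih hk]
        omega
    have upper : ∀ (h1 : m + 1 < n) (i : ℕ) (hi1 : m + 1 ≤ i) (hi2 : i < n),
        cf ⟨i, hi2⟩ = cf ⟨m + 1, h1⟩ + (i - (m + 1)) := by
      intro h1 i hi1 hi2
      induction i with
      | zero => omega
      | succ k ih =>
        rcases Nat.eq_or_lt_of_le hi1 with he | hlt
        · have hk : k = m := by omega
          subst hk
          simp
        · have hk2 : k < n := by omega
          have ihk := ih (by omega) hk2
          have := hstep k (cf ⟨k, hk2⟩) (cf ⟨k + 1, hi2⟩) (by omega) (hcf1 _) (hcf1 _)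
            (hcf2 ⟨k, hk2⟩ (show k ≠ m by omega)) (hcf2 ⟨k + 1, hi2⟩ (show k + 1 ≠ m by omega))
          rw [this, ihk]
          omega
    rcases Nat.eq_zero_or_pos m with hm0 | hm0
    · subst hm0
      by_cases hn1 : n = 1
      · right; left
        exact ⟨0, hm, hqm, fun i hi hi0 => absurd (show i = 0 by omega) hi0⟩
      · have h2 : 1 < n := by omega
        have hu : ∀ (i : ℕ) (hi1 : 1 ≤ i) (hi2 : i < n),
            cf ⟨i, hi2⟩ = cf ⟨1, h2⟩ + (i - 1) := by
          intro i hi1 hi2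
          have := upper h2 i (by omega) hi2
          simpa using this
        have hub := hu (n - 1) (by omega) (by omega)
        have h1n := hcf1 ⟨n - 1, by omega⟩
        have hc1 : cf ⟨1, h2⟩ ≤ 1 := by omega
        rcases Nat.lt_or_ge (cf ⟨1, h2⟩) 1 with hc0 | hc0
        · -- cf 1 = 0 : DB
          right; right; left
          refine ⟨hqm, fun i hi hi0 => ?_⟩
          have hcfi : cf ⟨i, hi⟩ = i - 1 := by
            have := hu i (by omega) hi
            omega
          rw [hcf2 ⟨i, hi⟩ (show i ≠ 0 by omega)]
          exact pcongr p hcfi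
        · -- cf 1 = 1 : DA with m = 0
          right; left
          refine ⟨0, hm, hqm, fun i hi hi0 => ?_⟩
          have hcfi : cf ⟨i, hi⟩ = i := by
            have := hu i (by omega) hi
            omega
          rw [hcf2 ⟨i, hi⟩ (show i ≠ 0 by omega)]
          exact pcongr p hcfi
    · by_cases hm1 : m + 1 < n
      · -- interior
        have hlow := lower (m - 1) (by omega)
        have hb1 : (m - 1 : ℕ) < n := by omega
        have hb2 : cf ⟨m - 1, hb1⟩ < n := hcf1 ⟨m - 1, hb1⟩
        have hb3 : cf ⟨m + 1, hm1⟩ < n := hcf1 ⟨m + 1, hm1⟩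
        have hsa : G.s a = vtx p hn (cf ⟨m - 1, hb1⟩ + 1) := by
          have hmk : (⟨m - 1 + 1, by omega⟩ : Fin n) = ⟨m, hm⟩ :=
            Fin.ext (by show m - 1 + 1 = m; omega)
          calc G.s a = G.s (q ⟨m, hm⟩) := by rw [hqm]
            _ = G.s (q ⟨m - 1 + 1, by omega⟩) := by rw [hmk]
            _ = G.t (q ⟨m - 1, hb1⟩) := (hq (m - 1) (by omega)).symm
            _ = G.t (p ⟨cf ⟨m - 1, hb1⟩, hb2⟩) := by
                  rw [hcf2 ⟨m - 1, hb1⟩ (show m - 1 ≠ m by omega)]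
            _ = vtx p hn (cf ⟨m - 1, hb1⟩ + 1) := (vtx_succ p hn hp hb2).symm
        have hta : G.t a = vtx p hn (cf ⟨m + 1, hm1⟩) := by
          calc G.t a = G.t (q ⟨m, hm⟩) := by rw [hqm]
            _ = G.s (q ⟨m + 1, hm1⟩) := hq m hm1
            _ = G.s (p ⟨cf ⟨m + 1, hm1⟩, hb3⟩) := by
                  rw [hcf2 ⟨m + 1, hm1⟩ (show m + 1 ≠ m by omega)]
            _ = vtx p hn (cf ⟨m + 1, hm1⟩) := (vtx_lt p hn hb3).symm
        have hcross : ¬ (cf ⟨m + 1, hm1⟩ ≤ cf ⟨m - 1, hb1⟩ + 1) := by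
          intro hle
          exact noloop_a hnl hn hp a hle (by omega) hta hsa
        have hub := upper hm1 (n - 1) (by omega) (by omega)
        have h1n := hcf1 ⟨n - 1, by omega⟩
        have hc0 : cf ⟨0, hn⟩ = 0 ∧ cf ⟨m + 1, hm1⟩ = m + 1 := by
          constructor <;> omega
        right; left
        refine ⟨m, hm, hqm, fun i hi him => ?_⟩
        have hcfi : cf ⟨i, hi⟩ = i := by
          rcases Nat.lt_or_ge i m with h | h
          · have := lower i h
            omega
          · have := upper hm1 i (by omega) hi
            omega
        rw [hcf2 ⟨i, hi⟩ him]
        exact pcongr p hcfi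
      · -- m = n - 1 (> 0)
        have hmn : m = n - 1 := by omega
        have hlow := lower (m - 1) (by omega)
        have h1n := hcf1 ⟨m - 1, by omega⟩
        have hc0 : cf ⟨0, hn⟩ ≤ 1 := by omega
        rcases Nat.lt_or_ge (cf ⟨0, hn⟩) 1 with hcc | hcc
        · -- cf 0 = 0 : DA with m = n - 1
          right; left
          refine ⟨m, hm, hqm, fun i hi him => ?_⟩
          have hcfi : cf ⟨i, hi⟩ = i := by
            have := lower i (by omega)
            omega
          rw [hcf2 ⟨i, hi⟩ him]
          exact pcongr p hcfi
        · -- cf 0 = 1 : DC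
          right; right; right
          constructor
          · rw [← hqm]
            exact congrArg q (Fin.ext (by show n - 1 = m; omega))
          · intro i hi
            have hin : i < n := by omega
            have hcfi : cf ⟨i, hin⟩ = i + 1 := by
              have := lower i (by omega)
              omega
            rw [hcf2 ⟨i, hin⟩ (show i ≠ m by omega)]
            exact pcongr p hcfi
  · -- no a anywhere : q = p
    push_neg at hA
    have hcf0 : ∀ i : Fin n, ∃ (c : ℕ) (hc : c < n), q i = p ⟨c, hc⟩ := by
      intro i
      rcases ha (q i) with h | ⟨c, hcc⟩
      · exact absurd h (hA i.1 i.2)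
      · exact ⟨c.1, c.2, by rw [hcc]⟩
    choose cf hcf1 hcf2 using hcf0
    have run : ∀ (i : ℕ) (hi : i < n), cf ⟨i, hi⟩ = cf ⟨0, hn⟩ + i := by
      intro i
      induction i with
      | zero => intro hi; rfl
      | succ k ih =>
        intro hi
        have hk : k < n := by omega
        have := hstep k (cf ⟨k, hk⟩) (cf ⟨k + 1, hi⟩) hi (hcf1 _) (hcf1 _)
          (hcf2 ⟨k, hk⟩) (hcf2 ⟨k + 1, hi⟩)
        rw [this, ih hk]
        omega
    left
    intro i
    obtain ⟨i, hi⟩ := i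
    have h0 : cf ⟨0, hn⟩ = 0 := by
      have := run (n - 1) (by omega)
      have := hcf1 ⟨n - 1, by omega⟩
      omega
    have hcfi : cf ⟨i, hi⟩ = i := by
      have := run i hi
      omega
    rw [hcf2 ⟨i, hi⟩]
    exact pcongr p hcfi

section Facts

variable {n : ℕ} (hnl : ¬ G.HasLoop) (hn : 0 < n) {p u : Fin n → G.E} (a : G.E)

lemma factDA_s (hp : G.IsPath p) (hu : G.IsPath u) {m : ℕ} (hm : m < n) (hm0 : 0 < m)
    (hum : u ⟨m, hm⟩ = a)
    (hU : ∀ (i : ℕ) (hi : i < n), i ≠ m → u ⟨i, hi⟩ = p ⟨i, hi⟩) :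
    G.s a = vtx p hn m := by
  have hb : m - 1 < n := by omega
  have hmk : (⟨m - 1 + 1, by omega⟩ : Fin n) = ⟨m, hm⟩ :=
    Fin.ext (by show m - 1 + 1 = m; omega)
  calc G.s a = G.s (u ⟨m, hm⟩) := by rw [hum]
    _ = G.s (u ⟨m - 1 + 1, by omega⟩) := by rw [hmk]
    _ = G.t (u ⟨m - 1, hb⟩) := (hu (m - 1) (by omega)).symm
    _ = G.t (p ⟨m - 1, hb⟩) := by rw [hU (m - 1) hb (by omega)]
    _ = vtx p hn (m - 1 + 1) := (vtx_succ p hn hp hb).symm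
    _ = vtx p hn m := by rw [show m - 1 + 1 = m by omega]

lemma factDA_t (hp : G.IsPath p) (hu : G.IsPath u) {m : ℕ} (hm : m < n) (hm1 : m + 1 < n)
    (hum : u ⟨m, hm⟩ = a)
    (hU : ∀ (i : ℕ) (hi : i < n), i ≠ m → u ⟨i, hi⟩ = p ⟨i, hi⟩) :
    G.t a = vtx p hn (m + 1) := by
  calc G.t a = G.t (u ⟨m, hm⟩) := by rw [hum]
    _ = G.s (u ⟨m + 1, hm1⟩) := hu m hm1
    _ = G.s (p ⟨m + 1, hm1⟩) := by rw [hU (m + 1) hm1 (by omega)]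
    _ = vtx p hn (m + 1) := (vtx_lt p hn hm1).symm

lemma factDB (hn2 : 1 < n) (hp : G.IsPath p) (hu : G.IsPath u)
    (hu0 : u ⟨0, hn⟩ = a)
    (hU : ∀ (i : ℕ) (hi : i < n), 0 < i → u ⟨i, hi⟩ = p ⟨i - 1, by omega⟩) :
    G.t a = vtx p hn 0 := by
  calc G.t a = G.t (u ⟨0, by omega⟩) := by rw [hu0]
    _ = G.s (u ⟨1, hn2⟩) := hu 0 hn2
    _ = G.s (p ⟨1 - 1, by omega⟩) := by rw [hU 1 hn2 (by omega)]
    _ = vtx p hn 0 := (vtx_lt p hn hn).symm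

lemma factDC (hn2 : 1 < n) (hp : G.IsPath p) (hu : G.IsPath u)
    (hun : u ⟨n - 1, by omega⟩ = a)
    (hU : ∀ (i : ℕ) (hi : i < n - 1), u ⟨i, by omega⟩ = p ⟨i + 1, by omega⟩) :
    G.s a = vtx p hn n := by
  have hb : n - 2 < n := by omega
  have hmk : (⟨n - 1, by omega⟩ : Fin n) = ⟨n - 2 + 1, by omega⟩ :=
    Fin.ext (by show n - 1 = n - 2 + 1; omega)
  calc G.s a = G.s (u ⟨n - 1, by omega⟩) := by rw [hun]
    _ = G.s (u ⟨n - 2 + 1, by omega⟩) := by rw [hmk]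
    _ = G.t (u ⟨n - 2, hb⟩) := (hu (n - 2) (by omega)).symm
    _ = G.t (p ⟨n - 2 + 1, by omega⟩) := by rw [hU (n - 2) (by omega)]
    _ = vtx p hn (n - 2 + 1 + 1) := (vtx_succ p hn hp (by omega)).symm
    _ = vtx p hn n := by rw [show n - 2 + 1 + 1 = n by omega]

end Facts

lemma unique (hnl : ¬ G.HasLoop) {n : ℕ} (hn : 0 < n) (p q r : Fin n → G.E)
    (hp : G.IsPath p) (hq : G.IsPath q) (hr : G.IsPath r) (a : G.E)
    (ha : ∀ x : G.E, x = a ∨ ∃ c : Fin n, x = p c)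
    (hqp : q ≠ p) (hrp : r ≠ p) : q = r := by
  by_cases hn1 : n = 1
  · subst hn1
    have key : ∀ u : Fin 1 → G.E, u ≠ p → u ⟨0, hn⟩ = a := by
      intro u hup
      rcases ha (u ⟨0, hn⟩) with h | ⟨c, hc⟩
      · exact h
      · exfalso
        apply hup
        funext i
        have hi0 : i = ⟨0, hn⟩ := Fin.ext (by have := i.isLt; omega)
        have hc0 : c = ⟨0, hn⟩ := Fin.ext (by have := c.isLt; omega)
        rw [hi0]
        exact hc.trans (congrArg p hc0)
    have h1 := key q hqp
    have h2 := key r hrp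
    funext i
    have hi0 : i = ⟨0, hn⟩ := Fin.ext (by have := i.isLt; omega)
    rw [hi0, h1, h2]
  · have hn2 : 1 < n := by omega
    -- contradiction helpers
    have kAA : ∀ m1 m2 : ℕ, m1 < n → m2 < n → m1 < m2 →
        (0 < m1 → G.s a = vtx p hn m1) → (m1 + 1 < n → G.t a = vtx p hn (m1 + 1)) →
        (0 < m2 → G.s a = vtx p hn m2) → False := by
      intro m1 m2 h1 h2 h12 f1s f1t f2s
      have hs2 : G.s a = vtx p hn m2 := f2s (by omega)
      rcases Nat.eq_zero_or_pos m1 with e | e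
      · have ht1 : G.t a = vtx p hn (m1 + 1) := f1t (by omega)
        exact noloop_a hnl hn hp a (show m1 + 1 ≤ m2 by omega) (by omega) ht1 hs2
      · have hs1 := f1s e
        have := vtx_inj hnl hn hp (by omega) (by omega) (hs1.symm.trans hs2)
        omega
    have kAB : ∀ m : ℕ, m < n →
        (0 < m → G.s a = vtx p hn m) → (m + 1 < n → G.t a = vtx p hn (m + 1)) →
        G.t a = vtx p hn 0 → False := by
      intro m hm fs ft htB
      by_cases hm1 : m + 1 < n
      · have := vtx_inj hnl hn hp (by omega) (by omega) ((ft hm1).symm.trans htB)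
        omega
      · have hs := fs (by omega)
        exact noloop_a hnl hn hp a (show 0 ≤ m by omega) (by omega) htB hs
    have kAC : ∀ m : ℕ, m < n →
        (0 < m → G.s a = vtx p hn m) → (m + 1 < n → G.t a = vtx p hn (m + 1)) →
        G.s a = vtx p hn n → False := by
      intro m hm fs ft hsC
      by_cases hm0 : 0 < m
      · have := vtx_inj hnl hn hp (by omega) (le_refl n) ((fs hm0).symm.trans hsC)
        omega
      · have hm0' : m = 0 := by omega
        subst hm0'
        have ht := ft (by omega)
        exact noloop_a hnl hn hp a (show 0 + 1 ≤ n by omega) (le_refl n) ht hsC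
    have kBC : G.t a = vtx p hn 0 → G.s a = vtx p hn n → False := by
      intro h1 h2
      exact noloop_a hnl hn hp a (Nat.zero_le n) (le_refl n) h1 h2
    rcases classify hnl hn p q hp hq a ha with hQ | ⟨m, hm, hqm, hQ⟩ | ⟨hq0, hQ⟩ | ⟨hqn, hQ⟩
    · exact absurd (funext hQ) hqp
    · -- q : DA m
      have qs := fun h0 => factDA_s (hn := hn) (a := a) hp hq hm h0 hqm hQ
      have qt := fun h1 => factDA_t (hn := hn) (a := a) hp hq hm h1 hqm hQ
      rcases classify hnl hn p r hp hr a ha with hR | ⟨m', hm', hrm, hR⟩ | ⟨hr0, hR⟩ | ⟨hrn, hR⟩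
      · exact absurd (funext hR) hrp
      · have rs := fun h0 => factDA_s (hn := hn) (a := a) hp hr hm' h0 hrm hR
        have rt := fun h1 => factDA_t (hn := hn) (a := a) hp hr hm' h1 hrm hR
        by_cases hmm : m = m'
        · subst hmm
          funext i
          obtain ⟨i, hi⟩ := i
          by_cases him : i = m
          · subst him
            rw [show (⟨i, hi⟩ : Fin n) = ⟨i, hm⟩ from rfl, hqm, hrm]
          · rw [hQ i hi him, hR i hi him]
        · exfalso
          rcases Nat.lt_or_gt_of_ne hmm with h | h
          · exact kAA m m' hm hm' h qs qt rs
          · exact kAA m' m hm' hm h rs rt qs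
      · exact absurd (factDB (hn := hn) (a := a) hn2 hp hr hr0 hR) (fun h => kAB m hm qs qt h)
      · exact absurd (factDC (hn := hn) (a := a) hn2 hp hr hrn hR) (fun h => kAC m hm qs qt h)
    · -- q : DB
      have qb := factDB (hn := hn) (a := a) hn2 hp hq hq0 hQ
      rcases classify hnl hn p r hp hr a ha with hR | ⟨m', hm', hrm, hR⟩ | ⟨hr0, hR⟩ | ⟨hrn, hR⟩
      · exact absurd (funext hR) hrp
      · have rs := fun h0 => factDA_s (hn := hn) (a := a) hp hr hm' h0 hrm hR
        have rt := fun h1 => factDA_t (hn := hn) (a := a) hp hr hm' h1 hrm hR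
        exact absurd qb (fun h => kAB m' hm' rs rt h)
      · funext i
        obtain ⟨i, hi⟩ := i
        rcases Nat.eq_zero_or_pos i with e | e
        · subst e
          rw [show (⟨0, hi⟩ : Fin n) = ⟨0, hn⟩ from rfl, hq0, hr0]
        · rw [hQ i hi e, hR i hi e]
      · exact absurd (factDC (hn := hn) (a := a) hn2 hp hr hrn hR) (kBC qb)
    · -- q : DC
      have qc := factDC (hn := hn) (a := a) hn2 hp hq hqn hQ
      rcases classify hnl hn p r hp hr a ha with hR | ⟨m', hm', hrm, hR⟩ | ⟨hr0, hR⟩ | ⟨hrn, hR⟩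
      · exact absurd (funext hR) hrp
      · have rs := fun h0 => factDA_s (hn := hn) (a := a) hp hr hm' h0 hrm hR
        have rt := fun h1 => factDA_t (hn := hn) (a := a) hp hr hm' h1 hrm hR
        exact absurd qc (fun h => kAC m' hm' rs rt h)
      · exact absurd qc (kBC (factDB (hn := hn) (a := a) hn2 hp hr hr0 hR))
      · funext i
        obtain ⟨i, hi⟩ := i
        rcases Nat.lt_or_ge i (n - 1) with e | e
        · rw [hQ i e, hR i e]
        · have e' : i = n - 1 := by omega
          subst e'
          rw [hqn]
          exact hrn.symm

end Stmt3Aux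

/-- a graph with exactly N ≥ 2 edges and no loops has at most two
distinct paths of length N - 1. -/
theorem stmt_3 (G : DGraph) (N : ℕ) (hN : 2 ≤ N) (hE : Nat.card G.E = N)
    (hnl : ¬ G.HasLoop) :
    Nat.card { p : Fin (N - 1) → G.E // G.IsPath p } ≤ 2 := by
  classical
  set n := N - 1 with hnn
  have hn : 0 < n := by omega
  have hcard : Nat.card G.E = n + 1 := by rw [hE]; omega
  have hfin : Finite G.E := Nat.finite_of_card_ne_zero (by omega)
  have : Fintype G.E := Fintype.ofFinite _
  rcases isEmpty_or_nonempty { p : Fin n → G.E // G.IsPath p } with he | hne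
  · simp [Nat.card_of_isEmpty]
  · obtain ⟨p0⟩ := hne
    -- the unique edge not in the range of p0
    have hpinj : Function.Injective p0.1 := by
      intro i j h
      apply Fin.ext
      apply Stmt3Aux.vtx_inj hnl hn p0.2 (by have := i.isLt; omega) (by have := j.isLt; omega)
      rw [Stmt3Aux.vtx_lt p0.1 hn i.isLt, Stmt3Aux.vtx_lt p0.1 hn j.isLt]
      exact congrArg G.s ((congrArg p0.1 (Fin.ext rfl)).trans (h.trans (congrArg p0.1 (Fin.ext rfl))))
    have hcard' : Fintype.card G.E = n + 1 := by
      rw [← Nat.card_eq_fintype_card, hcard]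
    have hsc : (Finset.univ.image p0.1)ᶜ.card = 1 := by
      rw [Finset.card_compl, Finset.card_image_of_injective _ hpinj, Finset.card_univ,
        Fintype.card_fin, hcard']
      omega
    obtain ⟨a, haa⟩ := Finset.card_eq_one.mp hsc
    have ha : ∀ x : G.E, x = a ∨ ∃ c : Fin n, x = p0.1 c := by
      intro x
      by_cases hx : x ∈ Finset.univ.image p0.1
      · right
        obtain ⟨c, _, hc⟩ := Finset.mem_image.mp hx
        exact ⟨c, hc.symm⟩
      · left
        have : x ∈ (Finset.univ.image p0.1)ᶜ := Finset.mem_compl.mpr hx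
        rw [haa] at this
        exact Finset.mem_singleton.mp this
    classical
    have hf : Function.Injective
        (fun q : { p : Fin n → G.E // G.IsPath p } => if q.1 = p0.1 then (0 : Fin 2) else 1) := by
      intro q r h
      simp only at h
      by_cases h1 : q.1 = p0.1 <;> by_cases h2 : r.1 = p0.1
      · exact Subtype.ext (h1.trans h2.symm)
      · rw [if_pos h1, if_neg h2] at h
        exact absurd h (by decide)
      · rw [if_neg h1, if_pos h2] at h
        exact absurd h (by decide)
      · exact Subtype.ext (Stmt3Aux.unique hnl hn p0.1 q.1 r.1 p0.2 q.2 r.2 a ha h1 h2)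
    calc Nat.card { p : Fin n → G.E // G.IsPath p } ≤ Nat.card (Fin 2) :=
          Nat.card_le_card_of_injective _ hf
      _ = 2 := by simp
end

section
/- Let N ≥ 2 and let k satisfy N ≥ k ≥ N − k ≥ 0. Then there exists a graph E with exactly N edges and no loops that has exactly 2^(N−k) distinct paths of length k. -/
open Finset

@[to_additive]
theorem Fin.prod_ite_val_lt {M : Type*} [CommMonoid M] {k m : ℕ} (hm : m ≤ k) (a b : M) :
    ∏ i : Fin k, (if (i : ℕ) < m then a else b) = a ^ m * b ^ (k - m) := by
  rw [prod_ite, Finset.prod_const, Finset.prod_const, Fin.card_filter_val_lt, filter_not,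
    card_sdiff_of_subset (filter_subset _ _), Fin.card_filter_val_lt]
  simp [hm]

namespace DGraph

section Height

variable {G : DGraph} {h : G.V → ℕ}

theorem IsPath.height_source (hh : ∀ e, h (G.t e) = h (G.s e) + 1) {l : ℕ} {p : Fin l → G.E}
    (hp : G.IsPath p) (i : ℕ) (hi : i < l) :
    h (G.s (p ⟨i, hi⟩)) = h (G.s (p ⟨0, by omega⟩)) + i := by
  induction i with
  | zero => rfl
  | succ n ih => rw [← hp n hi, hh, ih]; rfl

theorem not_hasLoop_of_height (hh : ∀ e, h (G.t e) = h (G.s e) + 1) : ¬ G.HasLoop := by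
  rintro ⟨l, p, hp, hloop⟩
  have hlast : h (G.s (p (Fin.last l))) = h (G.s (p 0)) + l := hp.height_source hh l l.lt_succ_self
  have := congrArg h hloop
  rw [hh] at this
  omega

end Height

def thickPath (k : ℕ) (c : Fin k → ℕ) : DGraph where
  V := Fin (k + 1)
  E := Σ i : Fin k, Fin (c i)
  s e := e.1.castSucc
  t e := e.1.succ

namespace thickPath

variable {k : ℕ} {c : Fin k → ℕ}

theorem card_edges : Nat.card (thickPath k c).E = ∑ i, c i := by
  simp [thickPath]

theorem val_target (e : (thickPath k c).E) :
    Fin.val (n := k + 1) ((thickPath k c).t e) = Fin.val (n := k + 1) ((thickPath k c).s e) + 1 :=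
  rfl

theorem not_hasLoop : ¬ (thickPath k c).HasLoop :=
  not_hasLoop_of_height (h := Fin.val) val_target

theorem isPath_iff {p : Fin k → (thickPath k c).E} :
    (thickPath k c).IsPath p ↔ ∀ i, (p i).1 = i := by
  refine ⟨fun hp i => Fin.ext ?_, fun hp i hi => ?_⟩
  · have hi := hp.height_source (h := Fin.val) val_target i i.2
    have hlast := hp.height_source (h := Fin.val) val_target (k - 1) (by omega)
    have hbound := (p ⟨k - 1, by omega⟩).1.2
    simp only [thickPath, Fin.val_castSucc, Fin.eta] at hi hlast
    omega
  · simp [thickPath, hp]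

theorem card_paths : Nat.card { p : Fin k → (thickPath k c).E // (thickPath k c).IsPath p } =
    ∏ i, c i :=
  (Nat.card_congr ((Equiv.subtypeEquivRight fun _ => isPath_iff).trans
    (Equiv.piEquivSubtypeSigma (Fin k) fun i => Fin (c i)).symm)).trans (by simp)

end thickPath

end DGraph

theorem stmt_5_general (N k : ℕ) (hkN : k ≤ N) (hNk : N - k ≤ k) :
    ∃ G : DGraph, Nat.card G.E = N ∧ ¬ G.HasLoop ∧
      Nat.card { p : Fin k → G.E // G.IsPath p } = 2 ^ (N - k) := by
  refine ⟨DGraph.thickPath k fun i => if (i : ℕ) < N - k then 2 else 1, ?_,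
    DGraph.thickPath.not_hasLoop, ?_⟩
  · rw [DGraph.thickPath.card_edges, Fin.sum_ite_val_lt hNk]
    simp only [smul_eq_mul]
    omega
  · rw [DGraph.thickPath.card_paths, Fin.prod_ite_val_lt hNk, one_pow, mul_one]

/-- for N ≥ 2 and N ≥ k ≥ N - k ≥ 0 there exists a graph with exactly
N edges and no loops having exactly 2^(N-k) distinct paths of length k. -/
theorem stmt_5 (N k : ℕ) (hN : 2 ≤ N) (hkN : k ≤ N) (hNk : N - k ≤ k) :
    ∃ G : DGraph, Nat.card G.E = N ∧ ¬ G.HasLoop ∧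
      Nat.card { p : Fin k → G.E // G.IsPath p } = 2 ^ (N - k) :=
  stmt_5_general N k hkN hNk
end

section
/- Let E be a graph with exactly N edges, where N ≥ 2, and with no loops. Let 1 ≤ k ≤ N and write N = n·k + r with 0 ≤ r ≤ k − 1. Then the number of distinct paths of length k in E is at most (n+1)^r · n^(k−r). -/
open Finset
namespace List

def maxSublistProd : ℕ → List ℕ → ℕ
  | 0, _ => 1
  | _ + 1, [] => 0
  | m + 1, a :: l => max (maxSublistProd (m + 1) l) (a * maxSublistProd m l)

@[simp] lemma maxSublistProd_zero (l : List ℕ) : maxSublistProd 0 l = 1 := by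
  cases l <;> rfl

@[simp] lemma maxSublistProd_succ_nil (m : ℕ) : maxSublistProd (m + 1) [] = 0 := rfl

lemma maxSublistProd_succ_cons (m a : ℕ) (l : List ℕ) :
    maxSublistProd (m + 1) (a :: l) = max (maxSublistProd (m + 1) l) (a * maxSublistProd m l) :=
  rfl

lemma maxSublistProd_le_of_sublist {l₁ l₂ : List ℕ} (h : l₁ <+ l₂) (m : ℕ) :
    maxSublistProd m l₁ ≤ maxSublistProd m l₂ := by
  induction h generalizing m with
  | slnil => rfl
  | cons a _ ih =>
    cases m with
    | zero => simp
    | succ m => exact (ih _).trans (le_max_left _ _)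
  | cons_cons a _ ih =>
    cases m with
    | zero => simp
    | succ m => exact max_le_max (ih _) (Nat.mul_le_mul_left a (ih m))

def pathBound (K : ℕ) : List ℕ → ℕ
  | [] => 0
  | a :: l => a * maxSublistProd K l + pathBound K l

lemma pathBound_eq_sum (K : ℕ) (x : List ℕ) :
    pathBound K x =
      ∑ i ∈ Finset.range x.length, x.getD i 0 * maxSublistProd K (x.drop (i + 1)) := by
  induction x with
  | nil => rfl
  | cons a x ih => simp [pathBound, Finset.sum_range_succ', ih, add_comm]

lemma prod_take_le_prod_take_orderedInsert (a : ℕ) {l : List ℕ} (hl : l.Pairwise (· ≥ ·))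
    {j : ℕ} (hj : j ≤ l.length) :
    (l.take j).prod ≤ ((l.orderedInsert (· ≥ ·) a).take j).prod := by
  induction l generalizing j with
  | nil => simp_all
  | cons b l ih =>
    obtain ⟨hb, hl⟩ := pairwise_cons.mp hl
    cases j with
    | zero => simp
    | succ j =>
      by_cases hab : a ≥ b
      · have hlt : j < (b :: l).length := by simpa using hj
        have hget : (b :: l)[j] ≤ a := by
          rcases j with _ | j
          · exact hab
          · exact (hb _ (getElem_mem _)).trans hab
        rw [prod_take_succ _ _ hlt, orderedInsert_cons, if_pos hab, take_succ_cons, prod_cons,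
          mul_comm a]
        exact Nat.mul_le_mul_left _ hget
      · rw [orderedInsert_cons, if_neg hab, take_succ_cons, take_succ_cons, prod_cons, prod_cons]
        exact Nat.mul_le_mul_left b (ih hl (by simpa using hj))

lemma mul_prod_take_le_prod_take_orderedInsert (a : ℕ) {l : List ℕ} (hl : l.Pairwise (· ≥ ·))
    (j : ℕ) : a * (l.take j).prod ≤ ((l.orderedInsert (· ≥ ·) a).take (j + 1)).prod := by
  induction l generalizing j with
  | nil => simp
  | cons b l ih =>
    obtain ⟨-, hl⟩ := pairwise_cons.mp hl
    by_cases hab : a ≥ b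
    · rw [orderedInsert_cons, if_pos hab, take_succ_cons, prod_cons]
    · rw [orderedInsert_cons, if_neg hab, take_succ_cons, prod_cons]
      cases j with
      | zero => simpa using (not_le.mp hab).le
      | succ j =>
        rw [take_succ_cons, prod_cons, mul_left_comm]
        exact Nat.mul_le_mul_left b (ih hl j)

/-- Scanning `x` from its last entry backwards, `l` keeps the `K` largest factors met so far,
sorted, and `u` absorbs the ones squeezed out. -/
lemma exists_pathBound_le_mul_prod (K : ℕ) (x : List ℕ) :
    ∃ (l : List ℕ) (u : ℕ), l.length = K ∧ l.Pairwise (· ≥ ·) ∧ u + l.sum ≤ x.sum ∧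
      (∀ j ≤ K, maxSublistProd j x ≤ (l.take j).prod) ∧ pathBound K x ≤ u * l.prod := by
  induction x with
  | nil =>
    refine ⟨replicate K 0, 0, length_replicate, pairwise_replicate.mpr (.inr le_rfl), by simp,
      fun j _ => ?_, by simp [pathBound]⟩
    cases j <;> simp
  | cons a x ih =>
    obtain ⟨l', u', hlen', hsorted', hsum', hmax', hbound'⟩ := ih
    set l'' := l'.orderedInsert (· ≥ ·) a
    have hlen'' : l''.length = K + 1 := by rw [orderedInsert_length, hlen']
    obtain ⟨v, hv⟩ : ∃ v, l''.drop K = [v] := length_eq_one_iff.mp (by simp [hlen''])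
    have hperm : l''.Perm (a :: l') := perm_orderedInsert _ a l'
    have hprod : (l''.take K).prod * v = a * l'.prod := by
      rw [← prod_cons, ← hperm.prod_eq, ← prod_take_mul_prod_drop l'' K, hv, prod_singleton]
    have hsum : (l''.take K).sum + v = a + l'.sum := by
      rw [← sum_cons, ← hperm.sum_eq, ← sum_take_add_sum_drop l'' K, hv, sum_singleton]
    have hmono : l'.prod ≤ (l''.take K).prod := by
      simpa [take_of_length_le hlen'.le] using
        prod_take_le_prod_take_orderedInsert a hsorted' hlen'.ge
    refine ⟨l''.take K, u' + v, by simp [hlen''], (hsorted'.orderedInsert a l').sublist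
      (take_sublist _ _), by simp only [sum_cons]; omega, fun j hj => ?_, ?_⟩
    · cases j with
      | zero => simp
      | succ j =>
        rw [take_take, min_eq_left hj, maxSublistProd_succ_cons]
        exact max_le ((hmax' _ hj).trans
            (prod_take_le_prod_take_orderedInsert a hsorted' (by omega)))
          ((Nat.mul_le_mul_left a (hmax' j (by omega))).trans
            (mul_prod_take_le_prod_take_orderedInsert a hsorted' j))
    · have hmaxK : maxSublistProd K x ≤ l'.prod := by
        simpa [take_of_length_le hlen'.le] using hmax' K le_rfl
      calc pathBound K (a :: x) ≤ a * l'.prod + u' * l'.prod :=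
            add_le_add (Nat.mul_le_mul_left a hmaxK) hbound'
        _ ≤ (l''.take K).prod * v + u' * (l''.take K).prod := by
            rw [hprod]; exact Nat.add_le_add_left (Nat.mul_le_mul_left u' hmono) _
        _ = (u' + v) * (l''.take K).prod := by ring

lemma natCast_le_mul_zpow {n : ℕ} (hn : 0 < n) (a : ℕ) :
    (a : ℝ) ≤ n * (1 + 1 / n) ^ ((a : ℤ) - n) := by
  have hn' : (0 : ℝ) < n := by exact_mod_cast hn
  rcases le_or_gt n a with h | h
  · have hb := one_add_mul_le_pow (a := 1 / (n : ℝ)) (by linarith [one_div_pos.mpr hn']) (a - n)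
    rw [show (a : ℤ) - n = ((a - n : ℕ) : ℤ) by omega, zpow_natCast]
    calc (a : ℝ) = n * (1 + (a - n : ℕ) * (1 / n)) := by
          rw [Nat.cast_sub h]; field_simp; ring
      _ ≤ _ := mul_le_mul_of_nonneg_left hb hn'.le
  · have hinv : (1 + 1 / (n : ℝ))⁻¹ = 1 + -1 / (n + 1) := by field_simp; ring
    have hb := one_add_mul_le_pow (a := -1 / ((n : ℝ) + 1)) (by
      rw [neg_div, neg_le_neg_iff]
      exact (div_le_one_of_le₀ (by linarith) (by positivity)).trans one_le_two) (n - a)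
    rw [show (a : ℤ) - n = -((n - a : ℕ) : ℤ) by omega, zpow_neg, zpow_natCast, ← inv_pow, hinv]
    calc (a : ℝ) ≤ n * (1 + (n - a : ℕ) * (-1 / (n + 1))) := by
          have ha : (a : ℝ) ≤ n := by exact_mod_cast h.le
          rw [Nat.cast_sub h.le, show (n : ℝ) * (1 + (n - a) * (-1 / (n + 1))) =
            n * (a + 1) / (n + 1) by field_simp; ring, le_div_iff₀ (by positivity)]
          nlinarith
      _ ≤ _ := mul_le_mul_of_nonneg_left hb hn'.le

lemma prod_le_pow_mul_zpow {n : ℕ} (hn : 0 < n) (y : List ℕ) :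
    (y.prod : ℝ) ≤ n ^ y.length * (1 + 1 / n) ^ ((y.sum : ℤ) - n * y.length) := by
  induction y with
  | nil => simp
  | cons a y ih =>
    have hc : (1 + 1 / (n : ℝ)) ≠ 0 := by positivity
    calc ((a :: y).prod : ℝ) = a * y.prod := by simp
      _ ≤ (n * (1 + 1 / n) ^ ((a : ℤ) - n)) *
            (n ^ y.length * (1 + 1 / n) ^ ((y.sum : ℤ) - n * y.length)) :=
          mul_le_mul (natCast_le_mul_zpow hn a) ih (by positivity) (by positivity)
      _ = _ := by
          rw [mul_mul_mul_comm, ← pow_succ', ← zpow_add₀ hc]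
          simp only [length_cons, sum_cons]
          push_cast
          ring_nf

theorem prod_le_pow_mul_pow_of_sum_le {n r : ℕ} {y : List ℕ} (hr : r < y.length)
    (hsum : y.sum ≤ n * y.length + r) : y.prod ≤ (n + 1) ^ r * n ^ (y.length - r) := by
  rcases Nat.eq_zero_or_pos n with rfl | hn
  · have hzero : 0 ∈ y := by
      by_contra h
      have := length_le_sum_of_one_le y fun a ha =>
        Nat.one_le_iff_ne_zero.mpr (ne_of_mem_of_not_mem ha h)
      omega
    simp [prod_eq_zero hzero, Nat.sub_ne_zero_of_lt hr]
  · have hn' : (0 : ℝ) < n := by exact_mod_cast hn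
    have hexp : (y.sum : ℤ) - n * y.length ≤ r := by omega
    suffices (y.prod : ℝ) ≤ (n + 1) ^ r * n ^ (y.length - r) by exact_mod_cast this
    calc (y.prod : ℝ) ≤ n ^ y.length * (1 + 1 / n) ^ ((y.sum : ℤ) - n * y.length) :=
          prod_le_pow_mul_zpow hn y
      _ ≤ n ^ y.length * (1 + 1 / n) ^ (r : ℤ) := by
          gcongr
          simp
      _ = (n + 1) ^ r * n ^ (y.length - r) := by
          rw [zpow_natCast, ← pow_mul_pow_sub _ hr.le, mul_right_comm, ← mul_pow]
          field_simp

theorem pathBound_le_pow_mul_pow {K n r : ℕ} {x : List ℕ} (hr : r < K + 1)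
    (hsum : x.sum ≤ n * (K + 1) + r) : pathBound K x ≤ (n + 1) ^ r * n ^ (K + 1 - r) := by
  obtain ⟨l, u, hlen, -, hlu, -, hbound⟩ := exists_pathBound_le_mul_prod K x
  have hprod := prod_le_pow_mul_pow_of_sum_le (n := n) (y := u :: l)
    (by simp only [length_cons, hlen]; omega) (by simp only [sum_cons, length_cons, hlen]; omega)
  simp only [prod_cons, length_cons, hlen] at hprod
  exact hbound.trans hprod

end List

namespace DGraph

variable {G : DGraph}

lemma IsPath.snoc {m : ℕ} {p : Fin m → G.E} (hp : G.IsPath p) {e : G.E}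
    (hend : ∀ h : 0 < m, G.t (p ⟨m - 1, by omega⟩) = G.s e) :
    G.IsPath (Fin.snoc p e : Fin (m + 1) → G.E) := by
  intro i hi
  rcases Nat.lt_or_ge (i + 1) m with h | h
  · simpa [Fin.snoc, h, show i < m by omega] using hp i h
  · obtain rfl : i = m - 1 := by omega
    simpa [Fin.snoc, show m - 1 < m by omega, show ¬ m - 1 + 1 < m by omega] using hend (by omega)

lemma IsPath.injective (hnl : ¬ G.HasLoop) {m : ℕ} {p : Fin m → G.E} (hp : G.IsPath p) :
    Function.Injective p := by
  suffices ∀ i j : Fin m, i < j → p i ≠ p j by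
    intro i j hij
    by_contra hne
    rcases lt_or_gt_of_ne hne with h | h
    exacts [this i j h hij, this j i h hij.symm]
  rintro ⟨i, hi⟩ ⟨j, hj⟩ (hij : i < j) heq
  refine hnl ⟨j - i - 1, fun a => p ⟨i + a, by omega⟩, fun b hb => hp (i + b) (by omega), ?_⟩
  have hlast := hp (j - 1) (by omega)
  simp only [Fin.val_zero, add_zero, Fin.val_last]
  rw [heq]
  convert hlast.symm using 4 <;> omega

lemma IsPath.length_le_card [Finite G.E] (hnl : ¬ G.HasLoop) {m : ℕ} {p : Fin m → G.E}
    (hp : G.IsPath p) : m ≤ Nat.card G.E := by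
  simpa using Nat.card_le_card_of_injective p (hp.injective hnl)

/-- The empty path counts as ending at every vertex. -/
def pathLengthsTo (G : DGraph) (v : G.V) : Set ℕ :=
  {m | ∃ p : Fin m → G.E, G.IsPath p ∧ ∀ h : 0 < m, G.t (p ⟨m - 1, by omega⟩) = v}

lemma zero_mem_pathLengthsTo (v : G.V) : 0 ∈ G.pathLengthsTo v :=
  ⟨Fin.elim0, fun _ h => by omega, fun h => absurd h (lt_irrefl 0)⟩

lemma bddAbove_pathLengthsTo [Finite G.E] (hnl : ¬ G.HasLoop) (v : G.V) :
    BddAbove (G.pathLengthsTo v) :=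
  ⟨Nat.card G.E, fun _ ⟨_, hp, _⟩ => hp.length_le_card hnl⟩

noncomputable def depth (G : DGraph) (v : G.V) : ℕ :=
  sSup (G.pathLengthsTo v)

lemma depth_le_card [Finite G.E] (hnl : ¬ G.HasLoop) (v : G.V) : G.depth v ≤ Nat.card G.E :=
  csSup_le ⟨0, zero_mem_pathLengthsTo v⟩ fun _ ⟨_, hp, _⟩ => hp.length_le_card hnl

lemma depth_source_lt_depth_target [Finite G.E] (hnl : ¬ G.HasLoop) (e : G.E) :
    G.depth (G.s e) < G.depth (G.t e) := by
  obtain ⟨p, hp, hend⟩ :=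
    Nat.sSup_mem ⟨0, zero_mem_pathLengthsTo _⟩ (bddAbove_pathLengthsTo hnl (G.s e))
  refine Nat.lt_of_succ_le (le_csSup (bddAbove_pathLengthsTo hnl _)
    ⟨Fin.snoc p e, hp.snoc hend, fun _ => ?_⟩)
  simp [Fin.snoc]

abbrev PathStartingWith (G : DGraph) (m : ℕ) (e : G.E) : Type :=
  {p : Fin (m + 1) → G.E // G.IsPath p ∧ p 0 = e}

lemma card_pathStartingWith_zero_le_one [Finite G.E] (e : G.E) :
    Nat.card (G.PathStartingWith 0 e) ≤ 1 :=
  Finite.card_le_one_iff_subsingleton.mpr ⟨fun p q => Subtype.ext <| funext fun i => by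
    rw [Fin.fin_one_eq_zero i, p.2.2, q.2.2]⟩

lemma card_pathStartingWith_succ_le [Finite G.E] (m : ℕ) (e : G.E) :
    Nat.card (G.PathStartingWith (m + 1) e) ≤
      Nat.card (Σ f : {f // G.s f = G.t e}, G.PathStartingWith m f) := by
  refine Nat.card_le_card_of_injective
    (fun p => ⟨⟨p.1 1, ?_⟩, Fin.tail p.1, fun i hi => p.2.1 (i + 1) (by omega), rfl⟩) ?_
  · simpa [p.2.2] using (p.2.1 0 (by omega)).symm
  · intro p q hpq
    have htail : Fin.tail p.1 = Fin.tail q.1 := congrArg (fun z => z.2.1) hpq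
    rw [Subtype.ext_iff, ← Fin.cons_self_tail p.1, ← Fin.cons_self_tail q.1, p.2.2, q.2.2, htail]

section Counting

variable (G) [Fintype G.E] {h : G.V → ℕ} {L : ℕ}

def levelCounts (h : G.V → ℕ) (L : ℕ) : List ℕ :=
  (List.range L).map fun i => #{e | h (G.s e) = i}

lemma sum_comp_eq_sum_card_fiber_mul (hL : ∀ v, h v < L) (F : ℕ → ℕ) :
    ∑ e, F (h (G.s e)) = ∑ i ∈ range L, #{e | h (G.s e) = i} * F i := by
  rw [← sum_fiberwise_of_maps_to (t := range L) fun e _ => mem_range.mpr (hL _)]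
  refine sum_congr rfl fun i _ => ?_
  rw [sum_congr rfl fun e he => by rw [(mem_filter.mp he).2], sum_const, smul_eq_mul]

lemma sum_levelCounts (hL : ∀ v, h v < L) : (G.levelCounts h L).sum = Fintype.card G.E := by
  have := G.sum_comp_eq_sum_card_fiber_mul hL fun _ => 1
  simp only [mul_one, sum_const, smul_eq_mul] at this
  rw [Fintype.card, this, levelCounts]
  simp only [Finset.sum_eq_multiset_sum, Finset.range_val, Multiset.range, Multiset.map_coe,
    Multiset.sum_coe]

variable {G}

lemma card_pathStartingWith_le (hh : ∀ e, h (G.s e) < h (G.t e)) (hL : ∀ v, h v < L)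
    (m : ℕ) (e : G.E) :
    Nat.card (G.PathStartingWith m e) ≤
      List.maxSublistProd m ((G.levelCounts h L).drop (h (G.s e) + 1)) := by
  classical
  induction m generalizing e with
  | zero => simpa using card_pathStartingWith_zero_le_one e
  | succ m ih =>
    set x := G.levelCounts h L
    set j := h (G.t e)
    have hj : j < x.length := by simpa [x, levelCounts] using hL _
    have hout : Nat.card {f // G.s f = G.t e} ≤ x[j] := by
      simp only [x, levelCounts, List.getElem_map, List.getElem_range]
      rw [← Fintype.card_subtype, ← Nat.card_eq_fintype_card]
      exact Nat.card_le_card_of_injective _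
        (Subtype.impEmbedding _ _ fun f (hf : G.s f = G.t e) => by rw [hf]).injective
    calc Nat.card (G.PathStartingWith (m + 1) e)
        ≤ Nat.card (Σ f : {f // G.s f = G.t e}, G.PathStartingWith m f) :=
          card_pathStartingWith_succ_le m e
      _ = ∑ f : {f // G.s f = G.t e}, Nat.card (G.PathStartingWith m f) := Nat.card_sigma
      _ ≤ #univ • List.maxSublistProd m (x.drop (j + 1)) :=
          sum_le_card_nsmul _ _ _ fun f _ => by simpa only [f.2] using ih f
      _ ≤ x[j] * List.maxSublistProd m (x.drop (j + 1)) := by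
          rw [smul_eq_mul, card_univ, ← Nat.card_eq_fintype_card]
          exact Nat.mul_le_mul_right _ hout
      _ ≤ List.maxSublistProd (m + 1) (x.drop j) := by
          rw [List.drop_eq_getElem_cons hj]; exact le_max_right _ _
      _ ≤ List.maxSublistProd (m + 1) (x.drop (h (G.s e) + 1)) :=
          List.maxSublistProd_le_of_sublist (List.drop_sublist_drop_left _ (hh e)) _

lemma card_paths_le_pathBound (hh : ∀ e, h (G.s e) < h (G.t e)) (hL : ∀ v, h v < L) (K : ℕ) :
    Nat.card {p : Fin (K + 1) → G.E // G.IsPath p} ≤ List.pathBound K (G.levelCounts h L) := by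
  set x := G.levelCounts h L
  calc Nat.card {p : Fin (K + 1) → G.E // G.IsPath p}
      ≤ Nat.card (Σ e, G.PathStartingWith K e) :=
        Nat.card_le_card_of_injective (fun p => ⟨p.1 0, p.1, p.2, rfl⟩)
          fun p q hpq => Subtype.ext (congrArg (fun z => z.2.1) hpq)
    _ = ∑ e, Nat.card (G.PathStartingWith K e) := Nat.card_sigma
    _ ≤ ∑ e, List.maxSublistProd K (x.drop (h (G.s e) + 1)) :=
        sum_le_sum fun e _ => card_pathStartingWith_le hh hL K e
    _ = List.pathBound K x := by
        rw [G.sum_comp_eq_sum_card_fiber_mul hL fun i => List.maxSublistProd K (x.drop (i + 1)),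
          List.pathBound_eq_sum, show x.length = L by simp [x, levelCounts]]
        refine sum_congr rfl fun i hi => ?_
        simp [x, levelCounts, mem_range.mp hi]

end Counting

end DGraph

theorem stmt_6_general (G : DGraph) (N k n r : ℕ) (hE : Nat.card G.E = N)
    (hnl : ¬ G.HasLoop) (hk : 1 ≤ k) (hkN : k ≤ N)
    (hdec : N = n * k + r) (hr : r ≤ k - 1) :
    Nat.card { p : Fin k → G.E // G.IsPath p } ≤ (n + 1) ^ r * n ^ (k - r) := by
  have : Finite G.E := Nat.finite_of_card_ne_zero (by omega)
  have := Fintype.ofFinite G.E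
  obtain ⟨K, rfl⟩ : ∃ K, k = K + 1 := ⟨k - 1, by omega⟩
  have hdepth (v : G.V) : G.depth v < Nat.card G.E + 1 :=
    Nat.lt_succ_of_le (G.depth_le_card hnl v)
  refine (DGraph.card_paths_le_pathBound (G.depth_source_lt_depth_target hnl) hdepth K).trans
    (List.pathBound_le_pow_mul_pow (by omega) ?_)
  rw [G.sum_levelCounts hdepth, ← Nat.card_eq_fintype_card]
  omega

/-- a graph with exactly N ≥ 2 edges and no loops, where 1 ≤ k ≤ N and
N = n·k + r with 0 ≤ r ≤ k - 1, has at most (n+1)^r · n^(k-r) paths of length k. -/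
theorem stmt_6 (G : DGraph) (N k n r : ℕ) (hN : 2 ≤ N) (hE : Nat.card G.E = N)
    (hnl : ¬ G.HasLoop) (hk : 1 ≤ k) (hkN : k ≤ N)
    (hdec : N = n * k + r) (hr : r ≤ k - 1) :
    Nat.card { p : Fin k → G.E // G.IsPath p } ≤ (n + 1) ^ r * n ^ (k - r) :=
  stmt_6_general G N k n r hE hnl hk hkN hdec hr
end

section
/- Fix N ≥ 2 and 1 ≤ k ≤ N, and write N = n·k + r with 0 ≤ r ≤ k − 1. Consider all square matrices A over the natural numbers (of any finite size m ≥ 1) such that: (1) A is nilpotent; (2) the sum of all entries of A equals N; (3) for every index i, the sum over j of A_{ij} + A_{ji} is positive. Then for every such matrix the sum of all entries of A^k is at most (n+1)^r · n^(k−r), and this value is attained by some matrix satisfying (1)–(3). -/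
open Finset

namespace Stmt11Aux



/-- smoothing lemma: product of k naturals with sum N is at most the balanced product -/
lemma multiset_prod_le (k : ℕ) (hk : 0 < k) (N : ℕ) :
    ∀ (s : Multiset ℕ), s.card = k → s.sum = N →
      s.prod ≤ (N / k + 1) ^ (N % k) * (N / k) ^ (k - N % k) := by
  set q := N / k with hq
  set t := N % k with ht
  have hNqt : N = k * q + t := (Nat.div_add_mod N k).symm
  have htk : t < k := Nat.mod_lt _ hk
  suffices H : ∀ (W : ℕ) (s : Multiset ℕ), (s.map (fun x => x * x)).sum = W →
      s.card = k → s.sum = N → s.prod ≤ (q + 1) ^ t * q ^ (k - t) by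
    intro s hc hs; exact H _ s rfl hc hs
  intro W
  induction W using Nat.strong_induction_on with
  | _ W ih =>
    intro s hW hcard hsum
    -- the smoothing step
    have key : ∀ x y : ℕ, x ∈ s → y ∈ s.erase x → x + 2 ≤ y →
        s.prod ≤ (q + 1) ^ t * q ^ (k - t) := by
      intro x y hx hy hxy
      obtain ⟨z, rfl⟩ : ∃ z, y = z + 1 := ⟨y - 1, by omega⟩
      have hxz : x + 1 ≤ z := by omega
      set u : Multiset ℕ := (s.erase x).erase (z + 1) with hu
      have hs2 : s.erase x = (z + 1) ::ₘ u := (Multiset.cons_erase hy).symm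
      have hs1 : s = x ::ₘ (z + 1) ::ₘ u := by
        rw [← hs2]; exact (Multiset.cons_erase hx).symm
      set s' : Multiset ℕ := (x + 1) ::ₘ z ::ₘ u with hs'
      rw [hs1] at hcard hsum hW
      have hcard' : s'.card = k := by
        rw [hs']
        simp only [Multiset.card_cons] at hcard ⊢
        omega
      have hsum' : s'.sum = N := by
        rw [hs']
        simp only [Multiset.sum_cons] at hsum ⊢
        omega
      have hmeas : ((s'.map (fun x => x * x)).sum) < W := by
        rw [← hW, hs']
        simp only [Multiset.map_cons, Multiset.sum_cons]
        nlinarith [hxz]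
      have hprod : s.prod ≤ s'.prod := by
        rw [hs1, hs']
        simp only [Multiset.prod_cons]
        rw [← mul_assoc, ← mul_assoc]
        have hm : x * (z + 1) ≤ (x + 1) * z := by nlinarith [hxz]
        exact Nat.mul_le_mul_right _ hm
      exact le_trans hprod (ih _ hmeas s' rfl hcard' hsum')
    by_cases hlow : ∃ x ∈ s, x < q
    · obtain ⟨x, hx, hxq⟩ := hlow
      have hex : ∃ y ∈ s.erase x, q + 1 ≤ y := by
        by_contra hcon
        push_neg at hcon
        have h1 : (s.erase x).sum ≤ Multiset.card (s.erase x) • q :=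
          Multiset.sum_le_card_nsmul _ _ (fun y hy => by have := hcon y hy; omega)
        have h2 : Multiset.card (s.erase x) = k - 1 := by
          rw [Multiset.card_erase_of_mem hx, hcard, Nat.pred_eq_sub_one]
        have h3 : s.sum = x + (s.erase x).sum := by
          conv_lhs => rw [← Multiset.cons_erase hx]
          simp
        rw [h2, smul_eq_mul] at h1
        have h4 : (k - 1) * q + q = k * q := by
          have hke : k - 1 + 1 = k := by omega
          calc (k - 1) * q + q = (k - 1 + 1) * q := by ring
            _ = k * q := by rw [hke]
        have ht0 : 0 ≤ t := Nat.zero_le t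
        linarith [h1, h3, h4, hxq, hNqt, hsum]
      obtain ⟨y, hy, hyq⟩ := hex
      exact key x y hx hy (by omega)
    · push_neg at hlow
      by_cases hhigh : ∃ y ∈ s, q + 1 < y
      · obtain ⟨y, hy, hyq⟩ := hhigh
        have hex : ∃ x ∈ s.erase y, x ≤ q := by
          by_contra hcon
          push_neg at hcon
          have h1 : Multiset.card (s.erase y) • (q + 1) ≤ (s.erase y).sum :=
            Multiset.card_nsmul_le_sum (fun x hx => by have := hcon x hx; omega)
          have h2 : Multiset.card (s.erase y) = k - 1 := by
            rw [Multiset.card_erase_of_mem hy, hcard, Nat.pred_eq_sub_one]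
          have h3 : s.sum = y + (s.erase y).sum := by
            conv_lhs => rw [← Multiset.cons_erase hy]
            simp
          rw [h2, smul_eq_mul] at h1
          have h4 : (k - 1) * (q + 1) + (q + 1) = k * (q + 1) := by
            have hke : k - 1 + 1 = k := by omega
            calc (k - 1) * (q + 1) + (q + 1) = (k - 1 + 1) * (q + 1) := by ring
              _ = k * (q + 1) := by rw [hke]
          have h5 : k * (q + 1) = k * q + k := by ring
          linarith [h1, h3, h4, h5, hyq, hNqt, hsum, htk]
        obtain ⟨x, hx, hxq⟩ := hex
        have hxs : x ∈ s := Multiset.mem_of_mem_erase hx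
        have hys : y ∈ s.erase x := (Multiset.mem_erase_of_ne (by omega)).mpr hy
        exact key x y hxs hys (by omega)
      · push_neg at hhigh
        have hall : ∀ x ∈ s, x = q ∨ x = q + 1 := by
          intro x hx
          have := hlow x hx
          have := hhigh x hx
          omega
        set c := s.count (q + 1) with hc
        set a := s.count q with ha
        have hsrep : s = Multiset.replicate a q + Multiset.replicate c (q + 1) := by
          ext b
          rw [Multiset.count_add, Multiset.count_replicate, Multiset.count_replicate]
          by_cases h1 : q = b
          · subst h1
            rw [if_pos rfl, if_neg (by omega)]
            omega
          · by_cases h2 : q + 1 = b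
            · subst h2
              rw [if_neg h1, if_pos rfl]
              omega
            · rw [if_neg h1, if_neg h2]
              have hb0 : b ∉ s := by
                intro hbs
                rcases hall b hbs with h | h <;> omega
              rw [Multiset.count_eq_zero_of_notMem hb0]
        have hcardeq : a + c = k := by
          rw [hsrep] at hcard
          simpa using hcard
        have hsumeq : a * q + c * (q + 1) = N := by
          rw [hsrep] at hsum
          simpa [Multiset.sum_replicate, smul_eq_mul] using hsum
        have h6 : a * q + c * q = k * q := by
          calc a * q + c * q = (a + c) * q := by ring
            _ = k * q := by rw [hcardeq]
        rw [show c * (q + 1) = c * q + c from by ring] at hsumeq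
        have hct : c = t := by linarith [h6, hsumeq, hNqt]
        have hat : a = k - t := by omega
        rw [hsrep, Multiset.prod_add, Multiset.prod_replicate, Multiset.prod_replicate,
          hct, hat, mul_comm]




/-- swap lemma: among equal-size subsets, a product-maximal one also maximizes
    (remainder)·(product). -/
lemma lemV (S : ℕ → ℕ) (U J : Finset ℕ) (hJU : J ⊆ U)
    (hmax : ∀ T : Finset ℕ, T ⊆ U → T.card = J.card → ∏ u ∈ T, S u ≤ ∏ u ∈ J, S u) :
    ∀ (d : ℕ) (T : Finset ℕ), (T \ J).card = d → T ⊆ U → T.card = J.card →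
      (∑ u ∈ U, S u - ∑ u ∈ T, S u) * ∏ u ∈ T, S u ≤
      (∑ u ∈ U, S u - ∑ u ∈ J, S u) * ∏ u ∈ J, S u := by
  intro d
  induction d using Nat.strong_induction_on with
  | _ d ih =>
    intro T hTd hTU hTcard
    by_cases hTJ : T = J
    · rw [hTJ]
    · have hTJne : (T \ J).Nonempty := by
        rcases Finset.eq_empty_or_nonempty (T \ J) with h | h
        · exfalso
          have hsub : T ⊆ J := by
            intro b hb
            by_contra hbJ
            have : b ∈ T \ J := Finset.mem_sdiff.mpr ⟨hb, hbJ⟩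
            rw [h] at this
            exact absurd this (Finset.notMem_empty b)
          exact hTJ (Finset.eq_of_subset_of_card_le hsub (le_of_eq hTcard.symm))
        · exact h
      by_cases hPJ : ∏ u ∈ J, S u = 0
      · have h0 : ∏ u ∈ T, S u = 0 := Nat.le_zero.mp (hPJ ▸ hmax T hTU hTcard)
        rw [h0, hPJ]
        simp
      · have hJpos : ∀ j ∈ J, 0 < S j := by
          intro j hj
          rcases Nat.eq_zero_or_pos (S j) with h | h
          · exact absurd (Finset.prod_eq_zero hj h) hPJ
          · exact h
        have hcards : (T \ J).card = (J \ T).card := by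
          have h1 := Finset.card_inter_add_card_sdiff T J
          have h2 := Finset.card_inter_add_card_sdiff J T
          rw [Finset.inter_comm J T] at h2
          omega
        have hJTne : (J \ T).Nonempty := by
          rw [← Finset.card_pos, ← hcards, Finset.card_pos]
          exact hTJne
        obtain ⟨x, hxTJ, hxmin⟩ := Finset.exists_min_image (T \ J) S hTJne
        obtain ⟨y, hyJT, hymax⟩ := Finset.exists_max_image (J \ T) S hJTne
        have hxT : x ∈ T := (Finset.mem_sdiff.mp hxTJ).1
        have hxnJ : x ∉ J := (Finset.mem_sdiff.mp hxTJ).2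
        have hyJ : y ∈ J := (Finset.mem_sdiff.mp hyJT).1
        have hynT : y ∉ T := (Finset.mem_sdiff.mp hyJT).2
        have hxyne : x ≠ y := fun h => hxnJ (h ▸ hyJ)
        -- S x ≤ S y
        have hxy : S x ≤ S y := by
          by_contra hcon
          push_neg at hcon
          have hddpos : 0 < (T \ J).card := Finset.card_pos.mpr hTJne
          have hub : ∏ u ∈ J \ T, S u ≤ S y ^ (T \ J).card := by
            rw [hcards]
            exact Finset.prod_le_pow_card _ _ _ (fun a ha => hymax a ha)
          have hlb : S x ^ (T \ J).card ≤ ∏ u ∈ T \ J, S u :=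
            Finset.pow_card_le_prod _ _ _ (fun a ha => hxmin a ha)
          have hlt : S y ^ (T \ J).card < S x ^ (T \ J).card :=
            Nat.pow_lt_pow_left hcon (by omega)
          have hJi : J \ (J ∩ T) = J \ T := Finset.sdiff_inter_self_left J T
          have hTi : T \ (T ∩ J) = T \ J := Finset.sdiff_inter_self_left T J
          have hJsplit : (∏ u ∈ J \ T, S u) * ∏ u ∈ J ∩ T, S u = ∏ u ∈ J, S u := by
            rw [← hJi]
            exact Finset.prod_sdiff (Finset.inter_subset_left)
          have hTsplit : (∏ u ∈ T \ J, S u) * ∏ u ∈ T ∩ J, S u = ∏ u ∈ T, S u := by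
            rw [← hTi]
            exact Finset.prod_sdiff (Finset.inter_subset_left)
          have hIpos : 0 < ∏ u ∈ J ∩ T, S u :=
            Finset.prod_pos (fun i hi => hJpos i (Finset.mem_of_mem_inter_left hi))
          have hPT : ∏ u ∈ T, S u ≤ ∏ u ∈ J, S u := hmax T hTU hTcard
          rw [← hJsplit, ← hTsplit, Finset.inter_comm T J] at hPT
          have hlt2 : ∏ u ∈ J \ T, S u < ∏ u ∈ T \ J, S u := by omega
          have hc2 : (∏ u ∈ J \ T, S u) * ∏ u ∈ J ∩ T, S u <
              (∏ u ∈ T \ J, S u) * ∏ u ∈ J ∩ T, S u :=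
            mul_lt_mul_of_pos_right hlt2 hIpos
          exact absurd hPT (not_le.mpr hc2)
        -- the swap
        set T' := insert y (T.erase x) with hT'
        have hynE : y ∉ T.erase x := fun h => hynT (Finset.mem_of_mem_erase h)
        have hxnE : x ∉ T.erase x := Finset.notMem_erase x T
        have hT'card : T'.card = J.card := by
          rw [hT', Finset.card_insert_of_notMem hynE, Finset.card_erase_of_mem hxT]
          have : 0 < T.card := Finset.card_pos.mpr ⟨x, hxT⟩
          omega
        have hT'U : T' ⊆ U := by
          rw [hT']
          exact Finset.insert_subset (hJU hyJ) ((Finset.erase_subset x T).trans hTU)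
        have hT'J : T' \ J = (T \ J).erase x := by
          ext b
          simp only [hT', Finset.mem_sdiff, Finset.mem_insert, Finset.mem_erase]
          constructor
          · rintro ⟨hb1 | ⟨hb2, hb3⟩, hb4⟩
            · exact absurd (hb1 ▸ hyJ) hb4
            · exact ⟨hb2, hb3, hb4⟩
          · rintro ⟨hb1, hb2, hb3⟩
            exact ⟨Or.inr ⟨hb1, hb2⟩, hb3⟩
        have hT'd : (T' \ J).card < d := by
          rw [hT'J, Finset.card_erase_of_mem hxTJ, hTd]
          have : 0 < d := hTd ▸ Finset.card_pos.mpr hTJne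
          omega
        -- sums and products
        have hsumT : ∑ u ∈ T, S u = S x + ∑ u ∈ T.erase x, S u :=
          (Finset.add_sum_erase T S hxT).symm
        have hsumT' : ∑ u ∈ T', S u = S y + ∑ u ∈ T.erase x, S u := by
          rw [hT', Finset.sum_insert hynE]
        have hprodT : ∏ u ∈ T, S u = S x * ∏ u ∈ T.erase x, S u :=
          (Finset.mul_prod_erase T S hxT).symm
        have hprodT' : ∏ u ∈ T', S u = S y * ∏ u ∈ T.erase x, S u := by
          rw [hT', Finset.prod_insert hynE]
        have hsub : ∑ u ∈ T.erase x, S u + S x + S y ≤ ∑ u ∈ U, S u := by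
          have hss : insert x (insert y (T.erase x)) ⊆ U := by
            refine Finset.insert_subset (hTU hxT) (Finset.insert_subset (hJU hyJ)
              ((Finset.erase_subset x T).trans hTU))
          have hxni : x ∉ insert y (T.erase x) := by
            simp only [Finset.mem_insert]
            rintro (h | h)
            · exact hxyne h
            · exact hxnE h
          have := Finset.sum_le_sum_of_subset (f := S) hss
          rw [Finset.sum_insert hxni, Finset.sum_insert hynE] at this
          omega
        obtain ⟨e, he⟩ := Nat.exists_eq_add_of_le hsub
        have hstep : (∑ u ∈ U, S u - ∑ u ∈ T, S u) * ∏ u ∈ T, S u ≤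
            (∑ u ∈ U, S u - ∑ u ∈ T', S u) * ∏ u ∈ T', S u := by
          rw [hsumT, hsumT', hprodT, hprodT']
          rw [show ∑ u ∈ U, S u - (S x + ∑ u ∈ T.erase x, S u) = S y + e from by omega,
              show ∑ u ∈ U, S u - (S y + ∑ u ∈ T.erase x, S u) = S x + e from by omega]
          have hm := Nat.mul_le_mul_left (e * ∏ u ∈ T.erase x, S u) hxy
          nlinarith [hm]
        exact le_trans hstep (ih _ hT'd T' rfl hT'U hT'card)




def QQ (S : ℕ → ℕ) (b c ℓ : ℕ) : ℕ :=
  ((Finset.Ico (ℓ+1) b).powersetCard c).sup fun T => ∏ j ∈ T, S j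

lemma QQ_zero (S : ℕ → ℕ) (b ℓ : ℕ) : QQ S b 0 ℓ = 1 := by
  rw [QQ, Finset.powersetCard_zero, Finset.sup_singleton]
  simp

lemma QQ_step (S : ℕ → ℕ) (b c ℓ j : ℕ) (h1 : ℓ < j) (h2 : j < b) :
    S j * QQ S b c j ≤ QQ S b (c+1) ℓ := by
  rcases Finset.eq_empty_or_nonempty ((Finset.Ico (j+1) b).powersetCard c) with hF | hF
  · rw [QQ, hF]
    simp
  · obtain ⟨T, hTF, hTsup⟩ := Finset.exists_mem_eq_sup _ hF (fun T => ∏ i ∈ T, S i)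
    obtain ⟨hTsub, hTcard⟩ := Finset.mem_powersetCard.mp hTF
    have hjT : j ∉ T := by
      intro h
      have := hTsub h
      rw [Finset.mem_Ico] at this
      omega
    have hmem : insert j T ∈ (Finset.Ico (ℓ+1) b).powersetCard (c+1) := by
      refine Finset.mem_powersetCard.mpr ⟨?_, ?_⟩
      · refine Finset.insert_subset (Finset.mem_Ico.mpr ⟨by omega, h2⟩) ?_
        exact hTsub.trans (Finset.Ico_subset_Ico (by omega) le_rfl)
      · rw [Finset.card_insert_of_notMem hjT, hTcard]
    calc S j * QQ S b c j = S j * ∏ i ∈ T, S i := by rw [QQ, hTsup]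
      _ = ∏ i ∈ insert j T, S i := (Finset.prod_insert hjT).symm
      _ ≤ QQ S b (c+1) ℓ := Finset.le_sup (f := fun T => ∏ i ∈ T, S i) hmem

lemma sup_id_mem (s : Finset ℕ) (h : s.Nonempty) : s.sup id ∈ s := by
  rw [← Finset.sup'_eq_sup h id, ← Finset.max'_eq_sup']
  exact Finset.max'_mem s h

/-- the level function for a nilpotent matrix -/
def lvl {m : ℕ} (A : Matrix (Fin m) (Fin m) ℕ) (M : ℕ) (v : Fin m) : ℕ :=
  ((Finset.range M).filter (fun c => 0 < ∑ x, (A ^ c) x v)).sup id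

lemma entry_sum_pow_le {m : ℕ} (A : Matrix (Fin m) (Fin m) ℕ) (k : ℕ) (hk : 1 ≤ k) (N : ℕ)
    (hnil : IsNilpotent A) (hsum : (∑ i, ∑ j, A i j) = N)
    (bnd : ℕ)
    (hnum : ∀ (S : ℕ → ℕ) (b : ℕ), (∑ ℓ ∈ Finset.Ico 0 b, S ℓ) = N →
      ∑ ℓ ∈ Finset.Ico 0 b, S ℓ * QQ S b (k-1) ℓ ≤ bnd) :
    (∑ i, ∑ j, (A ^ k) i j) ≤ bnd := by
  classical
  obtain ⟨M₀, hM₀⟩ := hnil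
  set M := M₀ + 1 with hM
  have hAM : A ^ M = 0 := by
    rw [hM, pow_succ, hM₀, zero_mul]
  have hApow0 : ∀ c, M ≤ c → A ^ c = 0 := by
    intro c hc
    have h1 : A ^ c = A ^ M * A ^ (c - M) := by
      rw [← pow_add]
      congr 1
      omega
    rw [h1, hAM, zero_mul]
  have hcolM : ∀ c (v : Fin m), 0 < ∑ x, (A ^ c) x v → c < M := by
    intro c v hc
    by_contra hcon
    push_neg at hcon
    rw [hApow0 c hcon] at hc
    simp at hc
  have hne : ∀ v : Fin m,
      ((Finset.range M).filter (fun c => 0 < ∑ x, (A ^ c) x v)).Nonempty := by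
    intro v
    refine ⟨0, Finset.mem_filter.mpr ⟨Finset.mem_range.mpr (by omega), ?_⟩⟩
    simp [Matrix.one_apply]
  have hfP : ∀ v, 0 < ∑ x, (A ^ (lvl A M v)) x v := by
    intro v
    have := sup_id_mem _ (hne v)
    exact (Finset.mem_filter.mp this).2
  have hfM : ∀ v, lvl A M v < M := by
    intro v
    have := sup_id_mem _ (hne v)
    exact Finset.mem_range.mp (Finset.mem_filter.mp this).1
  have hfle : ∀ (v : Fin m) c, 0 < ∑ x, (A ^ c) x v → c ≤ lvl A M v := by
    intro v c hc
    exact Finset.le_sup (f := id)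
      (Finset.mem_filter.mpr ⟨Finset.mem_range.mpr (hcolM c v hc), hc⟩)
  have hkey : ∀ v u : Fin m, 0 < A v u → lvl A M v < lvl A M u := by
    intro v u hvu
    have h2 : 0 < ∑ x, (A ^ (lvl A M v + 1)) x u := by
      have hle : (∑ x, (A ^ (lvl A M v)) x v) * A v u ≤ ∑ x, (A ^ (lvl A M v + 1)) x u := by
        rw [Finset.sum_mul]
        refine Finset.sum_le_sum ?_
        intro x _
        rw [pow_succ, Matrix.mul_apply]
        exact Finset.single_le_sum (f := fun w => (A ^ lvl A M v) x w * A w u)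
          (fun w _ => Nat.zero_le _) (Finset.mem_univ v)
      have h3 := hfP v
      nlinarith
    have := hfle u (lvl A M v + 1) h2
    omega
  -- level weights
  set S : ℕ → ℕ := fun ℓ => ∑ v ∈ Finset.univ.filter (fun v => lvl A M v = ℓ), ∑ j, A v j
    with hS
  have hSsum : ∑ ℓ ∈ Finset.Ico 0 M, S ℓ = N := by
    rw [← hsum, hS, ← Finset.range_eq_Ico]
    exact Finset.sum_fiberwise_of_maps_to (fun v _ => Finset.mem_range.mpr (hfM v)) _
  have hrowS : ∀ u : Fin m, (∑ j, A u j) ≤ S (lvl A M u) := by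
    intro u
    rw [hS]
    exact Finset.single_le_sum (f := fun v => ∑ j, A v j) (fun v _ => Nat.zero_le _)
      (Finset.mem_filter.mpr ⟨Finset.mem_univ u, rfl⟩)
  -- greedy bound
  have hgreedy : ∀ c (v : Fin m),
      (∑ j, (A ^ (c+1)) v j) ≤ (∑ j, A v j) * QQ S M c (lvl A M v) := by
    intro c
    induction c with
    | zero =>
      intro v
      rw [QQ_zero, mul_one]
      simp [pow_one]
    | succ c ih =>
      intro v
      have hexp : (∑ j, (A ^ (c+1+1)) v j) = ∑ u, A v u * ∑ j, (A ^ (c+1)) u j := by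
        simp only [pow_succ' (A) (c+1), Matrix.mul_apply]
        rw [Finset.sum_comm]
        exact Finset.sum_congr rfl fun u _ => by rw [Finset.mul_sum]
      rw [hexp]
      have hstep : ∀ u : Fin m,
          A v u * (∑ j, (A ^ (c+1)) u j) ≤ A v u * QQ S M (c+1) (lvl A M v) := by
        intro u
        rcases Nat.eq_zero_or_pos (A v u) with h | h
        · rw [h, zero_mul, zero_mul]
        · refine Nat.mul_le_mul_left _ ?_
          calc (∑ j, (A ^ (c+1)) u j) ≤ (∑ j, A u j) * QQ S M c (lvl A M u) := ih u
            _ ≤ S (lvl A M u) * QQ S M c (lvl A M u) :=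
                Nat.mul_le_mul_right _ (hrowS u)
            _ ≤ QQ S M (c+1) (lvl A M v) := QQ_step S M c _ _ (hkey v u h) (hfM u)
      calc (∑ u, A v u * ∑ j, (A ^ (c+1)) u j) ≤ ∑ u, A v u * QQ S M (c+1) (lvl A M v) :=
            Finset.sum_le_sum (fun u _ => hstep u)
        _ = (∑ u, A v u) * QQ S M (c+1) (lvl A M v) := (Finset.sum_mul _ _ _).symm
  -- assemble
  have hfib : (∑ i, ∑ j, (A ^ k) i j) =
      ∑ ℓ ∈ Finset.range M, ∑ v ∈ Finset.univ.filter (fun v => lvl A M v = ℓ),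
        ∑ j, (A ^ k) v j :=
    (Finset.sum_fiberwise_of_maps_to (fun v _ => Finset.mem_range.mpr (hfM v)) _).symm
  rw [hfib, Finset.range_eq_Ico]
  refine le_trans (Finset.sum_le_sum ?_) (hnum S M hSsum)
  intro ℓ _
  have hinner : ∀ v ∈ Finset.univ.filter (fun v => lvl A M v = ℓ),
      (∑ j, (A ^ k) v j) ≤ (∑ j, A v j) * QQ S M (k-1) ℓ := by
    intro v hv
    have hvl : lvl A M v = ℓ := (Finset.mem_filter.mp hv).2
    have hk1 : k - 1 + 1 = k := by omega
    have := hgreedy (k-1) v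
    rw [hk1, hvl] at this
    exact this
  calc (∑ v ∈ Finset.univ.filter (fun v => lvl A M v = ℓ), ∑ j, (A ^ k) v j)
      ≤ ∑ v ∈ Finset.univ.filter (fun v => lvl A M v = ℓ),
          (∑ j, A v j) * QQ S M (k-1) ℓ := Finset.sum_le_sum hinner
    _ = S ℓ * QQ S M (k-1) ℓ := by rw [hS, Finset.sum_mul]

lemma NUM (S : ℕ → ℕ) (b c : ℕ) :
    ∀ (n a : ℕ), b ≤ a + n →
      ∑ ℓ ∈ Finset.Ico a b, S ℓ * QQ S b c ℓ ≤
      ((Finset.Ico (a+1) b).powersetCard c).sup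
        (fun T => (∑ ℓ ∈ Finset.Ico a b, S ℓ - ∑ j ∈ T, S j) * ∏ j ∈ T, S j) := by
  intro n
  induction n with
  | zero =>
    intro a ha
    rw [Finset.Ico_eq_empty (by omega)]
    simp
  | succ n ihn =>
    intro a ha
    by_cases hab : a < b
    · have hW : ∑ ℓ ∈ Finset.Ico a b, S ℓ = S a + ∑ ℓ ∈ Finset.Ico (a+1) b, S ℓ :=
        Finset.sum_eq_sum_Ico_succ_bot hab _
      have hL : ∑ ℓ ∈ Finset.Ico a b, S ℓ * QQ S b c ℓ =
          S a * QQ S b c a + ∑ ℓ ∈ Finset.Ico (a+1) b, S ℓ * QQ S b c ℓ :=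
        Finset.sum_eq_sum_Ico_succ_bot hab _
      have htail := ihn (a+1) (by omega)
      rcases Finset.eq_empty_or_nonempty ((Finset.Ico (a+1) b).powersetCard c) with hF | hF
      · -- no (k-1)-subsets at all: everything is 0
        have hQ0 : QQ S b c a = 0 := by
          rw [QQ, hF]; rfl
        have hF' : ((Finset.Ico (a+2) b).powersetCard c) = ∅ := by
          rcases Finset.eq_empty_or_nonempty ((Finset.Ico (a+2) b).powersetCard c) with h | h
          · exact h
          · exfalso
            obtain ⟨T, hT⟩ := h
            obtain ⟨hT1, hT2⟩ := Finset.mem_powersetCard.mp hT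
            have : T ∈ (Finset.Ico (a+1) b).powersetCard c :=
              Finset.mem_powersetCard.mpr
                ⟨hT1.trans (Finset.Ico_subset_Ico (by omega) le_rfl), hT2⟩
            rw [hF] at this
            exact absurd this (Finset.notMem_empty T)
        rw [hF'] at htail
        simp only [Finset.sup_empty] at htail
        rw [hL, hQ0, hF]
        simp only [Finset.sup_empty, mul_zero, zero_add]
        exact le_trans htail (Nat.zero_le _)
      · obtain ⟨J, hJF, hJsup⟩ := Finset.exists_mem_eq_sup _ hF (fun T => ∏ j ∈ T, S j)
        obtain ⟨hJsub, hJcard⟩ := Finset.mem_powersetCard.mp hJF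
        have hmax : ∀ T : Finset ℕ, T ⊆ Finset.Ico (a+1) b → T.card = J.card →
            ∏ u ∈ T, S u ≤ ∏ u ∈ J, S u := by
          intro T hT1 hT2
          have : T ∈ (Finset.Ico (a+1) b).powersetCard c :=
            Finset.mem_powersetCard.mpr ⟨hT1, by omega⟩
          rw [← hJsup]
          exact Finset.le_sup (f := fun T => ∏ j ∈ T, S j) this
        have hQa : QQ S b c a = ∏ j ∈ J, S j := hJsup
        -- bound the tail sup by the J-value
        have htail2 : ∑ ℓ ∈ Finset.Ico (a+1) b, S ℓ * QQ S b c ℓ ≤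
            (∑ ℓ ∈ Finset.Ico (a+1) b, S ℓ - ∑ j ∈ J, S j) * ∏ j ∈ J, S j := by
          refine le_trans htail (Finset.sup_le ?_)
          intro T hT
          obtain ⟨hT1, hT2⟩ := Finset.mem_powersetCard.mp hT
          exact lemV S (Finset.Ico (a+1) b) J hJsub hmax _ T rfl
            (hT1.trans (Finset.Ico_subset_Ico (by omega) le_rfl)) (by omega)
        have hJle : ∑ j ∈ J, S j ≤ ∑ ℓ ∈ Finset.Ico (a+1) b, S ℓ :=
          Finset.sum_le_sum_of_subset hJsub
        rw [hL, hQa]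
        refine le_trans (by exact Nat.add_le_add_left htail2 _) ?_
        have harith : S a * ∏ j ∈ J, S j +
            (∑ ℓ ∈ Finset.Ico (a+1) b, S ℓ - ∑ j ∈ J, S j) * ∏ j ∈ J, S j =
            (∑ ℓ ∈ Finset.Ico a b, S ℓ - ∑ j ∈ J, S j) * ∏ j ∈ J, S j := by
          rw [← add_mul]
          congr 1
          omega
        rw [harith]
        exact Finset.le_sup
          (f := fun T => (∑ ℓ ∈ Finset.Ico a b, S ℓ - ∑ j ∈ T, S j) * ∏ j ∈ T, S j) hJF
    · rw [Finset.Ico_eq_empty (by omega)]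
      simp


lemma numfinal (k : ℕ) (hk : 1 ≤ k) (N : ℕ) (S : ℕ → ℕ) (b : ℕ)
    (hsum : ∑ ℓ ∈ Finset.Ico 0 b, S ℓ = N) :
    ∑ ℓ ∈ Finset.Ico 0 b, S ℓ * QQ S b (k-1) ℓ ≤
      (N / k + 1) ^ (N % k) * (N / k) ^ (k - N % k) := by
  refine le_trans (NUM S b (k-1) b 0 (by omega)) (Finset.sup_le ?_)
  intro T hT
  obtain ⟨hTsub, hTcard⟩ := Finset.mem_powersetCard.mp hT
  have hTle : ∑ j ∈ T, S j ≤ N := by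
    rw [← hsum]
    exact Finset.sum_le_sum_of_subset
      (hTsub.trans (Finset.Ico_subset_Ico (by omega) le_rfl))
  rw [hsum]
  have hcard : Multiset.card ((N - ∑ j ∈ T, S j) ::ₘ T.val.map S) = k := by
    rw [Multiset.card_cons, Multiset.card_map]
    have : Multiset.card T.val = T.card := rfl
    omega
  have hsum2 : ((N - ∑ j ∈ T, S j) ::ₘ T.val.map S).sum = N := by
    rw [Multiset.sum_cons]
    have : (T.val.map S).sum = ∑ j ∈ T, S j := rfl
    omega
  have hres := multiset_prod_le k (by omega) N _ hcard hsum2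
  rw [Multiset.prod_cons] at hres
  have hpv : (T.val.map S).prod = ∏ j ∈ T, S j := rfl
  rw [hpv] at hres
  exact hres



/-- weight of the t-th edge of the extremal path -/
def wt (n r t : ℕ) : ℕ := if t < r then n + 1 else n

/-- the extremal path matrix on k+1 vertices -/
def pA (k n r : ℕ) : Matrix (Fin (k+1)) (Fin (k+1)) ℕ :=
  Matrix.of fun i j => if (i : ℕ) + 1 = (j : ℕ) then wt n r (i : ℕ) else 0

lemma pA_apply (k n r : ℕ) (i j : Fin (k+1)) :
    pA k n r i j = if (i : ℕ) + 1 = (j : ℕ) then wt n r (i : ℕ) else 0 := rfl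

lemma pA_pow (k n r : ℕ) (p : ℕ) (i j : Fin (k+1)) :
    ((pA k n r) ^ p) i j =
      if (i : ℕ) + p = (j : ℕ) then ∏ t ∈ Ico (i : ℕ) ((i : ℕ) + p), wt n r t else 0 := by
  induction p generalizing i j with
  | zero =>
      by_cases h : i = j
      · subst h
        simp [Matrix.one_apply]
      · rw [pow_zero, Matrix.one_apply_ne h, if_neg]
        intro hc
        exact h (Fin.ext (by omega))
  | succ p ih =>
      rw [pow_succ, Matrix.mul_apply]
      by_cases hij : (i : ℕ) + (p + 1) = (j : ℕ)
      · have hl : (i : ℕ) + p < k + 1 := by have := j.isLt; omega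
        rw [if_pos hij]
        rw [Finset.sum_eq_single (⟨(i : ℕ) + p, hl⟩ : Fin (k+1))]
        · rw [ih, pA_apply]
          rw [if_pos rfl, if_pos (by simp; omega)]
          have he : (i : ℕ) + (p + 1) = ((i : ℕ) + p) + 1 := by omega
          rw [he, Finset.prod_Ico_succ_top (by omega : (i:ℕ) ≤ (i:ℕ) + p)]
        · intro l _ hne
          rw [ih]
          by_cases h1 : (i : ℕ) + p = (l : ℕ)
          · exact absurd (Fin.ext (by simpa using h1.symm)) hne
          · rw [if_neg h1, zero_mul]
        · intro h; exact absurd (Finset.mem_univ _) h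
      · rw [if_neg hij]
        apply Finset.sum_eq_zero
        intro l _
        rw [ih, pA_apply]
        by_cases h1 : (i : ℕ) + p = (l : ℕ)
        · rw [if_pos h1]
          rw [if_neg (by omega), mul_zero]
        · rw [if_neg h1, zero_mul]

lemma pA_nilpotent (k n r : ℕ) : IsNilpotent (pA k n r) := by
  refine ⟨k + 1, ?_⟩
  ext i j
  rw [pA_pow, if_neg (by have := j.isLt; omega)]
  simp

lemma wt_pos (n r t : ℕ) (hn : 1 ≤ n) : 0 < wt n r t := by
  unfold wt; split <;> omega

/-- helper : sum over Fin (k+1) of an ite on the coercion -/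
lemma sum_ite_fin (k v c : ℕ) (hv : v ≤ k) :
    (∑ j : Fin (k+1), if v = (j : ℕ) then c else 0) = c := by
  rw [Finset.sum_eq_single (⟨v, by omega⟩ : Fin (k+1))]
  · simp
  · intro j _ hne
    rw [if_neg]
    intro hc
    exact hne (Fin.ext (by simpa using hc.symm))
  · intro h; exact absurd (Finset.mem_univ _) h

lemma sum_ite_fin' (k v c : ℕ) (hv : k < v) :
    (∑ j : Fin (k+1), if v = (j : ℕ) then c else 0) = 0 := by
  apply Finset.sum_eq_zero
  intro j _
  rw [if_neg]
  have := j.isLt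
  omega

lemma pA_sum (k n r : ℕ) (hr : r ≤ k) :
    (∑ i, ∑ j, pA k n r i j) = n * k + r := by
  have inner : ∀ i : Fin (k+1), (∑ j, pA k n r i j)
      = if (i : ℕ) < k then wt n r (i : ℕ) else 0 := by
    intro i
    by_cases h : (i : ℕ) < k
    · rw [if_pos h]
      simp only [pA_apply]
      exact sum_ite_fin k ((i : ℕ) + 1) _ (by omega)
    · rw [if_neg h]
      simp only [pA_apply]
      exact sum_ite_fin' k ((i : ℕ) + 1) _ (by have := i.isLt; omega)
  rw [Finset.sum_congr rfl (fun i _ => inner i)]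
  rw [Fin.sum_univ_eq_sum_range (fun t => if t < k then wt n r t else 0)]
  rw [Finset.sum_range_succ, if_neg (lt_irrefl k), add_zero]
  have : ∀ t ∈ Finset.range k, (if t < k then wt n r t else 0) = n + (if t < r then 1 else 0) := by
    intro t ht
    rw [if_pos (Finset.mem_range.mp ht)]
    unfold wt; split <;> omega
  rw [Finset.sum_congr rfl this, Finset.sum_add_distrib, Finset.sum_const, Finset.card_range,
    smul_eq_mul, Finset.sum_boole]
  have : Finset.filter (fun t => t < r) (Finset.range k) = Finset.range r := by
    ext t; simp only [Finset.mem_filter, Finset.mem_range]; omega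
  rw [this, Finset.card_range]
  simp [mul_comm]

lemma prod_wt (k n r : ℕ) (hr : r ≤ k) :
    (∏ t ∈ Finset.range k, wt n r t) = (n + 1) ^ r * n ^ (k - r) := by
  rw [Finset.range_eq_Ico, ← Finset.prod_Ico_consecutive _ (Nat.zero_le r) hr]
  have h1 : (∏ t ∈ Finset.Ico 0 r, wt n r t) = (n + 1) ^ r := by
    have hc : ∀ t ∈ Finset.Ico 0 r, wt n r t = n + 1 := by
      intro t ht
      have := Finset.mem_Ico.mp ht
      unfold wt
      rw [if_pos (by omega)]
    rw [Finset.prod_congr rfl hc, Finset.prod_const, Nat.card_Ico, Nat.sub_zero]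
  have h2 : (∏ t ∈ Finset.Ico r k, wt n r t) = n ^ (k - r) := by
    have hc : ∀ t ∈ Finset.Ico r k, wt n r t = n := by
      intro t ht
      have := Finset.mem_Ico.mp ht
      unfold wt
      rw [if_neg (by omega)]
    rw [Finset.prod_congr rfl hc, Finset.prod_const, Nat.card_Ico]
  rw [h1, h2]

lemma pA_pow_sum (k n r : ℕ) (hr : r ≤ k) :
    (∑ i, ∑ j, ((pA k n r) ^ k) i j) = (n + 1) ^ r * n ^ (k - r) := by
  have inner : ∀ i : Fin (k+1), (∑ j, ((pA k n r) ^ k) i j)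
      = if (i : ℕ) = 0 then (n + 1) ^ r * n ^ (k - r) else 0 := by
    intro i
    by_cases h : (i : ℕ) = 0
    · rw [if_pos h]
      simp only [pA_pow]
      have := sum_ite_fin k ((i : ℕ) + k) (∏ t ∈ Ico (i : ℕ) ((i : ℕ) + k), wt n r t) (by omega)
      rw [this, h]
      rw [zero_add, ← Finset.range_eq_Ico]
      exact prod_wt k n r hr
    · rw [if_neg h]
      simp only [pA_pow]
      exact sum_ite_fin' k ((i : ℕ) + k) _ (by omega)
  rw [Finset.sum_congr rfl (fun i _ => inner i)]
  rw [Fin.sum_univ_eq_sum_range (fun t => if t = 0 then (n + 1) ^ r * n ^ (k - r) else 0)]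
  rw [Finset.sum_eq_single 0]
  · simp
  · intro t _ hne; rw [if_neg hne]
  · intro h; exact absurd (Finset.mem_range.mpr (by omega)) h

lemma pA_pos (k n r : ℕ) (hk : 1 ≤ k) (hn : 1 ≤ n) :
    ∀ i : Fin (k+1), 0 < ∑ j, (pA k n r i j + pA k n r j i) := by
  intro i
  apply Finset.sum_pos' (fun j _ => Nat.zero_le _)
  by_cases h : (i : ℕ) < k
  · refine ⟨⟨(i : ℕ) + 1, by omega⟩, Finset.mem_univ _, ?_⟩
    have : pA k n r i ⟨(i : ℕ) + 1, by omega⟩ = wt n r (i : ℕ) := by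
      rw [pA_apply, if_pos rfl]
    rw [this]
    exact Nat.add_pos_left (wt_pos n r _ hn) _
  · have hik : (i : ℕ) = k := by have := i.isLt; omega
    refine ⟨⟨k - 1, by omega⟩, Finset.mem_univ _, ?_⟩
    have : pA k n r ⟨k - 1, by omega⟩ i = wt n r (k - 1) := by
      rw [pA_apply, if_pos (by simp; omega)]
    rw [this]
    exact Nat.add_pos_right _ (wt_pos n r _ hn)


end Stmt11Aux

/-- fix N ≥ 2, 1 ≤ k ≤ N, and write N = n·k + r with 0 ≤ r ≤ k - 1.
Among all square matrices A over ℕ (of any finite size m ≥ 1) that are nilpotent,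
whose entries sum to N, and each of whose indices i satisfies ∑ⱼ (Aᵢⱼ + Aⱼᵢ) > 0,
the sum of all entries of A^k is at most (n+1)^r · n^(k-r), and this bound is
attained by some such matrix. -/
theorem stmt_11 (N k n r : ℕ) (hN : 2 ≤ N) (hk : 1 ≤ k) (hkN : k ≤ N)
    (hdec : N = n * k + r) (hr : r ≤ k - 1) :
    (∀ (m : ℕ), 1 ≤ m → ∀ A : Matrix (Fin m) (Fin m) ℕ,
      IsNilpotent A → (∑ i, ∑ j, A i j) = N → (∀ i, 0 < ∑ j, (A i j + A j i)) →
      (∑ i, ∑ j, (A ^ k) i j) ≤ (n + 1) ^ r * n ^ (k - r)) ∧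
    (∃ (m : ℕ), 1 ≤ m ∧ ∃ A : Matrix (Fin m) (Fin m) ℕ,
      IsNilpotent A ∧ (∑ i, ∑ j, A i j) = N ∧ (∀ i, 0 < ∑ j, (A i j + A j i)) ∧
      (∑ i, ∑ j, (A ^ k) i j) = (n + 1) ^ r * n ^ (k - r)) := by
  have hn : 1 ≤ n := by
    rcases Nat.eq_zero_or_pos n with h | h
    · subst h; simp at hdec; omega
    · exact h
  have hrk : r ≤ k := by omega
  have hmod : N % k = r := by
    rw [hdec, mul_comm, Nat.mul_add_mod]
    exact Nat.mod_eq_of_lt (by omega)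
  have hdiv : N / k = n := by
    rw [hdec, mul_comm, Nat.mul_add_div (by omega), Nat.div_eq_of_lt (by omega)]
    omega
  constructor
  · intro m _ A hnil hsum hpos
    have := Stmt11Aux.entry_sum_pow_le A k hk N hnil hsum
      ((N / k + 1) ^ (N % k) * (N / k) ^ (k - N % k))
      (fun S b hS => Stmt11Aux.numfinal k hk N S b hS)
    rwa [hmod, hdiv] at this
  · exact ⟨k + 1, by omega, Stmt11Aux.pA k n r, Stmt11Aux.pA_nilpotent k n r,
      by rw [Stmt11Aux.pA_sum k n r hrk]; omega,
      Stmt11Aux.pA_pos k n r hk hn,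
      Stmt11Aux.pA_pow_sum k n r hrk⟩
end

section
/- Let E be a graph with finitely many edges, no loops, and exactly one sink. Then E is connected: for any two distinct vertices v, w of E there exists an undirected finite path joining v and w. -/
/--  is an undirected path iff each pair of consecutive edges shares
at least one endpoint (in any of the four possible ways). -/
def DGraph.IsUndirPath (G : DGraph) {k : ℕ} (p : Fin k → G.E) : Prop :=
  ∀ (i : ℕ) (h : i + 1 < k),
    G.s (p ⟨i, Nat.lt_of_succ_lt h⟩) = G.s (p ⟨i + 1, h⟩) ∨
    G.s (p ⟨i, Nat.lt_of_succ_lt h⟩) = G.t (p ⟨i + 1, h⟩) ∨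
    G.t (p ⟨i, Nat.lt_of_succ_lt h⟩) = G.s (p ⟨i + 1, h⟩) ∨
    G.t (p ⟨i, Nat.lt_of_succ_lt h⟩) = G.t (p ⟨i + 1, h⟩)

lemma feq {α : Type} {k : ℕ} (p : Fin k → α) {a b : ℕ} (ha : a < k) (hb : b < k)
    (h : a = b) : p ⟨a, ha⟩ = p ⟨b, hb⟩ := by subst h; rfl

lemma loop_of_repeat (G : DGraph) {k : ℕ} (p : Fin k → G.E) (hp : G.IsPath p)
    {i j : Fin k} (hij : i < j) (he : p i = p j) : G.HasLoop := by
  have hjk : (j : ℕ) < k := j.isLt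
  have hij' : (i : ℕ) < (j : ℕ) := hij
  refine ⟨j.val - i.val - 1, fun a => p ⟨i.val + a.val, by omega⟩, ?_, ?_⟩
  · intro a ha
    exact hp (i.val + a) (by omega)
  · show G.s (p ⟨i.val + 0, by omega⟩) = G.t (p ⟨i.val + (j.val - i.val - 1), by omega⟩)
    have h1 := hp (j.val - 1) (by omega)
    rw [feq p (by omega) (by omega) (show i.val + (j.val - i.val - 1) = j.val - 1 by omega), h1,
      feq p (by omega) j.isLt (show j.val - 1 + 1 = j.val by omega)]
    rw [feq p (by omega) i.isLt (show i.val + 0 = i.val by omega)]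
    rw [show (⟨(i : ℕ), i.isLt⟩ : Fin k) = i from rfl,
      show (⟨(j : ℕ), j.isLt⟩ : Fin k) = j from rfl, he]

lemma path_len_le (G : DGraph) [Finite G.E] (hnl : ¬ G.HasLoop) {k : ℕ}
    (p : Fin k → G.E) (hp : G.IsPath p) : k ≤ Nat.card G.E := by
  by_contra h
  have hni : ¬ Function.Injective p := by
    intro hinj
    have := Nat.card_le_card_of_injective p hinj
    simp [Nat.card_eq_fintype_card] at this
    omega
  rw [Function.not_injective_iff] at hni
  obtain ⟨a, b, hab, hne⟩ := hni
  rcases lt_or_gt_of_ne hne with hlt | hlt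
  · exact hnl (loop_of_repeat G p hp hlt hab)
  · exact hnl (loop_of_repeat G p hp hlt hab.symm)

lemma prepend (G : DGraph) (e : G.E) {k : ℕ} (p : Fin (k + 1) → G.E)
    (hp : G.IsPath p) (h : G.t e = G.s (p 0)) :
    ∃ p' : Fin (k + 1 + 1) → G.E, G.IsPath p' ∧ G.s (p' 0) = G.s e ∧
      G.t (p' (Fin.last (k + 1))) = G.t (p (Fin.last k)) := by
  refine ⟨fun i => if hi : (i : ℕ) = 0 then e else p ⟨i.val - 1, by omega⟩, ?_, ?_, ?_⟩
  · intro i hi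
    by_cases h0 : i = 0
    · subst h0
      show G.t (if hi : (0 : ℕ) = 0 then e else _) = G.s (if hi : (1 : ℕ) = 0 then e else p ⟨1 - 1, by omega⟩)
      rw [dif_pos rfl, dif_neg (by omega : ¬ (1 : ℕ) = 0), h]
      have e0 : (⟨1 - 1, by omega⟩ : Fin (k + 1)) = 0 := Fin.ext (by simp)
      rw [e0]
    · show G.t (if hi' : (i : ℕ) = 0 then e else p ⟨i - 1, by omega⟩) =
        G.s (if hi' : (i + 1 : ℕ) = 0 then e else p ⟨i + 1 - 1, by omega⟩)
      rw [dif_neg h0, dif_neg (by omega : ¬ (i + 1 : ℕ) = 0)]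
      have h2 := hp (i - 1) (by omega)
      calc G.t (p ⟨i - 1, by omega⟩) = G.s (p ⟨i - 1 + 1, by omega⟩) := h2
        _ = _ := congrArg G.s (feq p (by omega) (by omega) (by omega))
  · show G.s (if hi : (0 : ℕ) = 0 then e else _) = G.s e
    rw [dif_pos rfl]
  · show G.t (if hi : (k + 1 : ℕ) = 0 then e else p ⟨k + 1 - 1, by omega⟩) = _
    rw [dif_neg (by omega : ¬ (k + 1 : ℕ) = 0)]
    exact congrArg G.t (feq p (by omega) (by omega) (by omega))

lemma reach (G : DGraph) [Finite G.E] (hnl : ¬ G.HasLoop) (v₀ : G.V)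
    (hv₀ : ∀ u : G.V, (∀ e : G.E, G.s e ≠ u) → u = v₀) :
    ∀ n : ℕ, ∀ v : G.V, v ≠ v₀ →
      (∀ (k : ℕ) (p : Fin (k + 1) → G.E), G.IsPath p → G.s (p 0) = v → k + 1 ≤ n) →
      ∃ (m : ℕ) (p : Fin (m + 1) → G.E), G.IsPath p ∧ G.s (p 0) = v ∧
        G.t (p (Fin.last m)) = v₀ := by
  intro n
  induction n with
  | zero =>
    intro v hv hb
    obtain ⟨e, he⟩ : ∃ e : G.E, G.s e = v := by
      by_contra hc; push_neg at hc; exact hv (hv₀ v hc)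
    have := hb 0 (fun _ => e) (fun i hi => by omega) he
    omega
  | succ n ih =>
    intro v hv hb
    obtain ⟨e, he⟩ : ∃ e : G.E, G.s e = v := by
      by_contra hc; push_neg at hc; exact hv (hv₀ v hc)
    by_cases ht : G.t e = v₀
    · exact ⟨0, fun _ => e, fun i hi => by omega, he, ht⟩
    · have hb' : ∀ (k : ℕ) (p : Fin (k + 1) → G.E), G.IsPath p → G.s (p 0) = G.t e →
          k + 1 ≤ n := by
        intro k p hp hs
        obtain ⟨p', hp', hs', _⟩ := prepend G e p hp (by rw [hs])
        have := hb (k + 1) p' hp' (by rw [hs', he])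
        omega
      obtain ⟨m, q, hq, hqs, hqt⟩ := ih (G.t e) ht hb'
      obtain ⟨p', hp', hs', ht'⟩ := prepend G e q hq (by rw [hqs])
      exact ⟨m + 1, p', hp', by rw [hs', he], by rw [ht', hqt]⟩

lemma reach' (G : DGraph) [Finite G.E] (hnl : ¬ G.HasLoop) (v₀ : G.V)
    (hv₀ : ∀ u : G.V, (∀ e : G.E, G.s e ≠ u) → u = v₀) (v : G.V) (hv : v ≠ v₀) :
    ∃ (m : ℕ) (p : Fin (m + 1) → G.E), G.IsPath p ∧ G.s (p 0) = v ∧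
      G.t (p (Fin.last m)) = v₀ :=
  reach G hnl v₀ hv₀ (Nat.card G.E) v hv
    (fun k p hp _ => path_len_le G hnl p hp)

def cat (G : DGraph) (a b : ℕ) (p : Fin (a + 1) → G.E) (q : Fin (b + 1) → G.E) :
    Fin (a + b + 1 + 1) → G.E :=
  fun i => if h : (i : ℕ) ≤ a then p ⟨i, by omega⟩ else q ⟨b - (i.val - (a + 1)), by omega⟩

lemma cat_lo (G : DGraph) (a b : ℕ) (p : Fin (a + 1) → G.E) (q : Fin (b + 1) → G.E)
    {i : ℕ} (hi : i < a + b + 2) (h : i ≤ a) :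
    cat G a b p q ⟨i, hi⟩ = p ⟨i, by omega⟩ := dif_pos h

lemma cat_hi (G : DGraph) (a b : ℕ) (p : Fin (a + 1) → G.E) (q : Fin (b + 1) → G.E)
    {i : ℕ} (hi : i < a + b + 2) (h : ¬ i ≤ a) :
    cat G a b p q ⟨i, hi⟩ = q ⟨b - (i - (a + 1)), by omega⟩ := dif_neg h

/-- a graph with finitely many edges, no loops, and exactly one sink is
connected: any two distinct vertices are joined by an undirected finite path. -/
theorem stmt_12 (G : DGraph) [Finite G.E] (hnl : ¬ G.HasLoop)
    (hsink : ∃! v : G.V, ∀ e : G.E, G.s e ≠ v) :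
    ∀ v w : G.V, v ≠ w →
      ∃ (m : ℕ) (p : Fin (m + 1) → G.E), G.IsUndirPath p ∧
        (G.s (p 0) = v ∨ G.t (p 0) = v) ∧
        (G.s (p (Fin.last m)) = w ∨ G.t (p (Fin.last m)) = w) := by
  obtain ⟨v₀, hv₀, huniq⟩ := hsink
  have huniq' : ∀ u : G.V, (∀ e : G.E, G.s e ≠ u) → u = v₀ := huniq
  intro v w hvw
  by_cases hw : w = v₀
  · have hv : v ≠ v₀ := fun h => hvw (h.trans hw.symm)
    obtain ⟨m, p, hp, hs, ht⟩ := reach' G hnl v₀ huniq' v hv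
    exact ⟨m, p, fun i hi => Or.inr (Or.inr (Or.inl (hp i hi))), Or.inl hs,
      Or.inr (by rw [ht, hw])⟩
  · by_cases hv : v = v₀
    · obtain ⟨m, p, hp, hs, ht⟩ := reach' G hnl v₀ huniq' w hw
      refine ⟨m, fun i => p ⟨m - i.val, by omega⟩, ?_, ?_, ?_⟩
      · intro i hi
        refine Or.inr (Or.inl ?_)
        have h1 := hp (m - i - 1) (by omega)
        rw [feq p (by omega) (by omega) (show m - i - 1 + 1 = m - i by omega)] at h1
        show G.s (p ⟨m - i, by omega⟩) = G.t (p ⟨m - (i + 1), by omega⟩)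
        rw [feq p (by omega) (by omega) (show m - (i + 1) = m - i - 1 by omega)]
        exact h1.symm
      · refine Or.inr ?_
        show G.t (p ⟨m - 0, by omega⟩) = v
        have e0 : (⟨m - 0, by omega⟩ : Fin (m + 1)) = Fin.last m := Fin.ext (by simp [Fin.last])
        rw [e0, ht, hv]
      · refine Or.inl ?_
        show G.s (p ⟨m - m, by omega⟩) = w
        have e0 : (⟨m - m, by omega⟩ : Fin (m + 1)) = 0 := Fin.ext (by simp)
        rw [e0]; exact hs
    · obtain ⟨a, p, hp, hps, hpt⟩ := reach' G hnl v₀ huniq' v hv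
      obtain ⟨b, q, hq, hqs, hqt⟩ := reach' G hnl v₀ huniq' w hw
      refine ⟨a + b + 1, cat G a b p q, ?_, ?_, ?_⟩
      · intro i hi
        by_cases h1 : i + 1 ≤ a
        · rw [show (⟨i, Nat.lt_of_succ_lt hi⟩ : Fin (a + b + 1 + 1)) = ⟨i, by omega⟩ from rfl,
            cat_lo G a b p q (by omega) (by omega),
            show (⟨i + 1, hi⟩ : Fin (a + b + 1 + 1)) = ⟨i + 1, by omega⟩ from rfl,
            cat_lo G a b p q (by omega) h1]
          exact Or.inr (Or.inr (Or.inl (hp i (by omega))))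
        · by_cases h2 : i ≤ a
          · -- i = a : junction
            rw [cat_lo G a b p q (by omega) h2, cat_hi G a b p q (by omega) (by omega)]
            refine Or.inr (Or.inr (Or.inr ?_))
            rw [feq p (by omega) (by omega) (show i = a by omega),
              feq q (by omega) (by omega) (show b - (i + 1 - (a + 1)) = b by omega)]
            rw [show (⟨a, by omega⟩ : Fin (a + 1)) = Fin.last a from rfl,
              show (⟨b, by omega⟩ : Fin (b + 1)) = Fin.last b from rfl, hpt, hqt]
          · rw [cat_hi G a b p q (by omega) h2, cat_hi G a b p q (by omega) (by omega)]
            refine Or.inr (Or.inl ?_)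
            have h3 := hq (b - (i - (a + 1)) - 1) (by omega)
            rw [feq q (by omega) (by omega)
              (show b - (i - (a + 1)) - 1 + 1 = b - (i - (a + 1)) by omega)] at h3
            rw [feq q (by omega) (by omega)
              (show b - (i + 1 - (a + 1)) = b - (i - (a + 1)) - 1 by omega)]
            exact h3.symm
      · refine Or.inl ?_
        rw [show (0 : Fin (a + b + 1 + 1)) = ⟨0, by omega⟩ from rfl,
          cat_lo G a b p q (by omega) (by omega)]
        rw [show (⟨0, by omega⟩ : Fin (a + 1)) = 0 from rfl]
        exact hps
      · refine Or.inl ?_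
        rw [show (Fin.last (a + b + 1) : Fin (a + b + 1 + 1)) = ⟨a + b + 1, by omega⟩ from rfl,
          cat_hi G a b p q (by omega) (by omega),
          feq q (by omega) (by omega) (show b - (a + b + 1 - (a + 1)) = 0 by omega)]
        rw [show (⟨0, by omega⟩ : Fin (b + 1)) = 0 from rfl]
        exact hqs
end

section
/- Let F and G be graphs whose source maps agree and whose target maps agree on the common edge set F¹ ∩ G¹, so that the intersection graph F ∩ G := (F⁰ ∩ G⁰, F¹ ∩ G¹) and the union graph F ∪ G := (F⁰ ∪ G⁰, F¹ ∪ G¹) are defined. If both inclusions F ∩ G ↪ F and F ∩ G ↪ G are admissible, then both inclusions F ↪ F ∪ G and G ↪ F ∪ G are admissible. -/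
/-- A graph carved out of ambient vertex/edge types `V` and `E`: a set of vertices,
a set of edges, and source/target maps sending the edges into the vertices. -/
structure SetGraph (V E : Type) where
  verts : Set V
  edges : Set E
  s : E → V
  t : E → V
  s_mem : ∀ e ∈ edges, s e ∈ verts
  t_mem : ∀ e ∈ edges, t e ∈ verts

namespace SetGraph

variable {V E : Type}

/-- `A` is a subgraph of `B`: vertices and edges are included and the source and
target maps of `A` are the restrictions of those of `B`. -/
def IsSubgraph (A B : SetGraph V E) : Prop :=
  A.verts ⊆ B.verts ∧ A.edges ⊆ B.edges ∧
    ∀ e ∈ A.edges, A.s e = B.s e ∧ A.t e = B.t e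

/-- A subset `H` of the vertices of `B` is hereditary iff every edge of `B` whose
source lies in `H` has its target in `H`. -/
def Hereditary (B : SetGraph V E) (H : Set V) : Prop :=
  ∀ e ∈ B.edges, B.s e ∈ H → B.t e ∈ H

/-- A subset `H` of the vertices of `B` is saturated iff no vertex outside `H` emits
a nonempty finite set of edges all of whose targets lie in `H`. -/
def Saturated (B : SetGraph V E) (H : Set V) : Prop :=
  ¬ ∃ v ∈ B.verts \ H,
      ({e ∈ B.edges | B.s e = v}).Nonempty ∧
      ({e ∈ B.edges | B.s e = v}).Finite ∧
      ∀ e ∈ B.edges, B.s e = v → B.t e ∈ H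

/-- The inclusion of a subgraph `A ⊆ B` is admissible iff `B.verts \ A.verts` is
hereditary and saturated in `B`, and the edges of `A` are exactly the edges of `B`
whose target lies in `A.verts`. -/
def Admissible (A B : SetGraph V E) : Prop :=
  IsSubgraph A B ∧
  Hereditary B (B.verts \ A.verts) ∧
  Saturated B (B.verts \ A.verts) ∧
  A.edges = {e ∈ B.edges | B.t e ∈ A.verts}

/-- The intersection graph of two graphs whose source and target maps agree on the
common edges. -/
def inter (F G : SetGraph V E)
    (hs : ∀ e ∈ F.edges ∩ G.edges, F.s e = G.s e)
    (ht : ∀ e ∈ F.edges ∩ G.edges, F.t e = G.t e) : SetGraph V E where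
  verts := F.verts ∩ G.verts
  edges := F.edges ∩ G.edges
  s := F.s
  t := F.t
  s_mem := fun e he => ⟨F.s_mem e he.1, by rw [hs e he]; exact G.s_mem e he.2⟩
  t_mem := fun e he => ⟨F.t_mem e he.1, by rw [ht e he]; exact G.t_mem e he.2⟩

open Classical in
/-- The union graph of two graphs whose source and target maps agree on the
common edges. -/
noncomputable def union (F G : SetGraph V E) : SetGraph V E where
  verts := F.verts ∪ G.verts
  edges := F.edges ∪ G.edges
  s := fun e => if e ∈ F.edges then F.s e else G.s e
  t := fun e => if e ∈ F.edges then F.t e else G.t e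
  s_mem := by
    intro e he
    by_cases h : e ∈ F.edges
    · simpa [h] using Or.inl (F.s_mem e h)
    · simpa [h] using Or.inr (G.s_mem e (he.resolve_left h))
  t_mem := by
    intro e he
    by_cases h : e ∈ F.edges
    · simpa [h] using Or.inl (F.t_mem e h)
    · simpa [h] using Or.inr (G.t_mem e (he.resolve_left h))

end SetGraph

/-- if both inclusions F ∩ G ↪ F and F ∩ G ↪ G are admissible, then
both inclusions F ↪ F ∪ G and G ↪ F ∪ G are admissible. -/
theorem stmt_15 {V E : Type} (F G : SetGraph V E)
    (hs : ∀ e ∈ F.edges ∩ G.edges, F.s e = G.s e)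
    (ht : ∀ e ∈ F.edges ∩ G.edges, F.t e = G.t e)
    (h1 : SetGraph.Admissible (SetGraph.inter F G hs ht) F)
    (h2 : SetGraph.Admissible (SetGraph.inter F G hs ht) G) :
    SetGraph.Admissible F (SetGraph.union F G) ∧
    SetGraph.Admissible G (SetGraph.union F G) := by
  classical
  obtain ⟨-, -, hsat1, hE1⟩ := h1
  obtain ⟨-, -, hsat2, hE2⟩ := h2
  have memE1 : ∀ e, e ∈ F.edges → F.t e ∈ G.verts → e ∈ G.edges := by
    intro e he hv
    have : e ∈ ({e | e ∈ F.edges ∧ F.t e ∈ (SetGraph.inter F G hs ht).verts} : Set E) :=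
      ⟨he, F.t_mem e he, hv⟩
    rw [← hE1] at this
    exact this.2
  have memE2 : ∀ e, e ∈ G.edges → G.t e ∈ F.verts → e ∈ F.edges := by
    intro e he hv
    have : e ∈ ({e | e ∈ G.edges ∧ G.t e ∈ (SetGraph.inter F G hs ht).verts} : Set E) :=
      ⟨he, hv, G.t_mem e he⟩
    rw [← hE2] at this
    exact this.1
  have hsF : ∀ e ∈ F.edges, (SetGraph.union F G).s e = F.s e := by
    intro e he; simp [SetGraph.union, he]
  have htF : ∀ e ∈ F.edges, (SetGraph.union F G).t e = F.t e := by
    intro e he; simp [SetGraph.union, he]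
  have hsG : ∀ e ∈ G.edges, (SetGraph.union F G).s e = G.s e := by
    intro e he
    by_cases h : e ∈ F.edges
    · simp [SetGraph.union, h, hs e ⟨h, he⟩]
    · simp [SetGraph.union, h]
  have htG : ∀ e ∈ G.edges, (SetGraph.union F G).t e = G.t e := by
    intro e he
    by_cases h : e ∈ F.edges
    · simp [SetGraph.union, h, ht e ⟨h, he⟩]
    · simp [SetGraph.union, h]
  constructor
  · refine ⟨⟨Set.subset_union_left, Set.subset_union_left,
      fun e he => ⟨(hsF e he).symm, (htF e he).symm⟩⟩, ?_, ?_, ?_⟩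
    · -- hereditary
      rintro e he ⟨hv1, hv2⟩
      have heF : e ∉ F.edges := fun h => hv2 ((hsF e h) ▸ F.s_mem e h)
      have heG : e ∈ G.edges := he.resolve_left heF
      refine ⟨Or.inr ((htG e heG) ▸ G.t_mem e heG), ?_⟩
      rw [htG e heG]
      exact fun hx => heF (memE2 e heG hx)
    · -- saturated
      rintro ⟨v, ⟨hv1, hv2⟩, hne, hfin, htgt⟩
      have hvF : v ∈ F.verts := by
        by_contra h; exact hv2 ⟨hv1, h⟩
      have hnoF : ∀ e ∈ F.edges, (SetGraph.union F G).s e = v → False := by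
        intro e he hse
        have h := htgt e (Or.inl he) hse
        exact h.2 ((htF e he) ▸ F.t_mem e he)
      have hset : {e ∈ (SetGraph.union F G).edges | (SetGraph.union F G).s e = v}
          = {e ∈ G.edges | G.s e = v} := by
        ext e
        constructor
        · rintro ⟨he, hse⟩
          have heF : e ∉ F.edges := fun h => hnoF e h hse
          have heG : e ∈ G.edges := he.resolve_left heF
          exact ⟨heG, (hsG e heG) ▸ hse⟩
        · rintro ⟨he, hse⟩
          exact ⟨Or.inr he, (hsG e he).symm ▸ hse⟩
      obtain ⟨e0, he0, hse0⟩ := hset ▸ hne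
      have hvG : v ∈ G.verts := hse0 ▸ G.s_mem e0 he0
      apply hsat2
      refine ⟨v, ⟨hvG, fun hx => hx.2 ⟨hvF, hvG⟩⟩, ?_, ?_, ?_⟩
      · rwa [← hset]
      · rwa [← hset]
      · intro e he hse
        have heF : e ∉ F.edges := fun h => hnoF e h ((hsG e he) ▸ hse)
        have h := htgt e (Or.inr he) ((hsG e he) ▸ hse)
        rw [htG e he] at h
        exact ⟨G.t_mem e he, fun hx => h.2 hx.1⟩
    · -- edges
      ext e
      constructor
      · intro he
        exact ⟨Or.inl he, (htF e he).symm ▸ F.t_mem e he⟩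
      · rintro ⟨he, hte⟩
        by_cases h : e ∈ F.edges
        · exact h
        · have heG : e ∈ G.edges := he.resolve_left h
          rw [htG e heG] at hte
          exact memE2 e heG hte
  · refine ⟨⟨Set.subset_union_right, Set.subset_union_right,
      fun e he => ⟨(hsG e he).symm, (htG e he).symm⟩⟩, ?_, ?_, ?_⟩
    · -- hereditary
      rintro e he ⟨hv1, hv2⟩
      have heG : e ∉ G.edges := fun h => hv2 ((hsG e h) ▸ G.s_mem e h)
      have heF : e ∈ F.edges := he.resolve_right heG
      refine ⟨Or.inl ((htF e heF) ▸ F.t_mem e heF), ?_⟩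
      rw [htF e heF]
      exact fun hx => heG (memE1 e heF hx)
    · -- saturated
      rintro ⟨v, ⟨hv1, hv2⟩, hne, hfin, htgt⟩
      have hvG : v ∈ G.verts := by
        by_contra h; exact hv2 ⟨hv1, h⟩
      have hnoG : ∀ e ∈ G.edges, (SetGraph.union F G).s e = v → False := by
        intro e he hse
        have h := htgt e (Or.inr he) hse
        exact h.2 ((htG e he) ▸ G.t_mem e he)
      have hset : {e ∈ (SetGraph.union F G).edges | (SetGraph.union F G).s e = v}
          = {e ∈ F.edges | F.s e = v} := by
        ext e
        constructor
        · rintro ⟨he, hse⟩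
          have heG : e ∉ G.edges := fun h => hnoG e h hse
          have heF : e ∈ F.edges := he.resolve_right heG
          exact ⟨heF, (hsF e heF) ▸ hse⟩
        · rintro ⟨he, hse⟩
          exact ⟨Or.inl he, (hsF e he).symm ▸ hse⟩
      obtain ⟨e0, he0, hse0⟩ := hset ▸ hne
      have hvF : v ∈ F.verts := hse0 ▸ F.s_mem e0 he0
      apply hsat1
      refine ⟨v, ⟨hvF, fun hx => hx.2 ⟨hvF, hvG⟩⟩, ?_, ?_, ?_⟩
      · rwa [← hset]
      · rwa [← hset]
      · intro e he hse
        have h := htgt e (Or.inl he) ((hsF e he) ▸ hse)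
        rw [htF e he] at h
        exact ⟨F.t_mem e he, fun hx => h.2 hx.2⟩
    · -- edges
      ext e
      constructor
      · intro he
        exact ⟨Or.inr he, (htG e he).symm ▸ G.t_mem e he⟩
      · rintro ⟨he, hte⟩
        by_cases h : e ∈ G.edges
        · exact h
        · have heF : e ∈ F.edges := he.resolve_right h
          rw [htF e heF] at hte
          exact memE1 e heF hte
end

section
/- Let F and G be graphs whose source maps agree and whose target maps agree on the common edge set F¹ ∩ G¹. It is not true in general that admissibility of both inclusions F ↪ F ∪ G and G ↪ F ∪ G implies admissibility of both inclusions F ∩ G ↪ F and F ∩ G ↪ G: there exist graphs F and G (F having vertices w₁, v and countably infinitely many edges from v to w₁; G having vertices v, w₂ and a single edge from v to w₂) for which both inclusions into F ∪ G are admissible, but the inclusion F ∩ G ↪ G is not admissible. -/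
/-!
In `F ∪ G` the vertex `v` emits infinitely many edges, so saturation says nothing about it, and
both inclusions into `F ∪ G` are admissible. But `F ∩ G` is the single vertex `v`, which in `G`
emits exactly one edge, to `w₂`: so `G⁰ \ (F ∩ G)⁰ = {w₂}` is not saturated in `G`.
-/

namespace SetGraph

variable {V E : Type}

def out (B : SetGraph V E) (v : V) : Set E :=
  {e ∈ B.edges | B.s e = v}

theorem union_s_of_s_eq {F G : SetGraph V E} (h : F.s = G.s) : (union F G).s = F.s := by
  funext e
  simp only [union, h, ite_self]

theorem union_t_of_t_eq {F G : SetGraph V E} (h : F.t = G.t) : (union F G).t = F.t := by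
  funext e
  simp only [union, h, ite_self]

theorem isSubgraph_union_left (F G : SetGraph V E) : IsSubgraph F (union F G) :=
  ⟨Set.subset_union_left, Set.subset_union_left, fun e he => by simp [union, he]⟩

theorem isSubgraph_union_right {F G : SetGraph V E}
    (hs : ∀ e ∈ F.edges ∩ G.edges, F.s e = G.s e)
    (ht : ∀ e ∈ F.edges ∩ G.edges, F.t e = G.t e) : IsSubgraph G (union F G) := by
  refine ⟨Set.subset_union_right, Set.subset_union_right, fun e he => ?_⟩
  by_cases hF : e ∈ F.edges
  · simp [union, hF, hs e ⟨hF, he⟩, ht e ⟨hF, he⟩]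
  · simp [union, hF]

theorem hereditary_diff_of_s_mem {A B : SetGraph V E} (h : ∀ e ∈ B.edges, B.s e ∈ A.verts) :
    Hereditary B (B.verts \ A.verts) :=
  fun e he hs => absurd (h e he) hs.2

theorem saturated_of_out_infinite_or_empty {B : SetGraph V E} {H : Set V}
    (h : ∀ v ∈ B.verts \ H, (B.out v).Infinite ∨ B.out v = ∅) : Saturated B H := by
  rintro ⟨v, hv, hne, hfin, -⟩
  rcases h v hv with hinf | hempty
  · exact hinf hfin
  · exact hne.ne_empty hempty

theorem not_saturated_of_out_eq_singleton {B : SetGraph V E} {H : Set V} {v : V} {e : E}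
    (hv : v ∈ B.verts \ H) (hout : B.out v = {e}) (he : B.t e ∈ H) : ¬ Saturated B H := by
  refine fun hsat => hsat ⟨v, hv, ?_, ?_, fun e' he' hs => ?_⟩
  · change (B.out v).Nonempty
    exact hout ▸ Set.singleton_nonempty e
  · change (B.out v).Finite
    exact hout ▸ Set.finite_singleton e
  · have : e' ∈ B.out v := ⟨he', hs⟩
    rw [hout] at this
    exact this ▸ he

end SetGraph

open SetGraph

-- Vertices `0 = v`, `1 = w₁`, `2 = w₂`; the edge `none` is `G`'s, the edges `some n` are `F`'s.
def targetFG : Option ℕ → ℕ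
  | none => 2
  | some _ => 1

def graphF : SetGraph ℕ (Option ℕ) where
  verts := {1, 0}
  edges := Set.range some
  s := fun _ => 0
  t := targetFG
  s_mem := fun _ _ => by simp
  t_mem := fun _ ⟨_, he⟩ => by simp [← he, targetFG]

def graphG : SetGraph ℕ (Option ℕ) where
  verts := {0, 2}
  edges := {none}
  s := fun _ => 0
  t := targetFG
  s_mem := fun _ _ => by simp
  t_mem := by rintro _ rfl; simp [targetFG]

theorem union_graphF_graphG_s : (union graphF graphG).s = fun _ => 0 :=
  union_s_of_s_eq rfl

theorem union_graphF_graphG_t : (union graphF graphG).t = targetFG :=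
  union_t_of_t_eq rfl

theorem union_graphF_graphG_edges : (union graphF graphG).edges = Set.univ := by
  ext (_ | _) <;> simp [union, graphF, graphG]

theorem out_union_graphF_graphG (v : ℕ) :
    ((union graphF graphG).out v).Infinite ∨ (union graphF graphG).out v = ∅ := by
  by_cases hv : v = 0
  · left
    simpa [out, union_graphF_graphG_edges, union_graphF_graphG_s, hv] using Set.infinite_univ
  · right
    simp [out, union_graphF_graphG_s, Ne.symm hv]

theorem admissible_graphF_union : Admissible graphF (union graphF graphG) := by
  refine ⟨isSubgraph_union_left _ _, hereditary_diff_of_s_mem ?_,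
    saturated_of_out_infinite_or_empty fun v _ => out_union_graphF_graphG v, ?_⟩
  · simp only [union_graphF_graphG_s]
    simp [graphF]
  · rw [union_graphF_graphG_edges, union_graphF_graphG_t]
    ext (_ | _) <;> simp [graphF, targetFG]

theorem admissible_graphG_union : Admissible graphG (union graphF graphG) := by
  refine ⟨isSubgraph_union_right (fun _ _ => rfl) (fun _ _ => rfl), hereditary_diff_of_s_mem ?_,
    saturated_of_out_infinite_or_empty fun v _ => out_union_graphF_graphG v, ?_⟩
  · simp only [union_graphF_graphG_s]
    simp [graphG]
  · rw [union_graphF_graphG_edges, union_graphF_graphG_t]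
    ext (_ | _) <;> simp [graphG, targetFG]

theorem not_admissible_inter_graphG :
    ¬ Admissible (inter graphF graphG (fun _ _ => rfl) (fun _ _ => rfl)) graphG := by
  rintro ⟨-, -, hsat, -⟩
  refine not_saturated_of_out_eq_singleton (v := 0) (e := none) ?_ ?_ ?_ hsat
  · simp [inter, graphF, graphG]
  · ext (_ | _) <;> simp [out, graphG]
  · simp [inter, graphF, graphG, targetFG]

/-- admissibility of both F ↪ F ∪ G and G ↪ F ∪ G does not imply
admissibility of the intersection: there are graphs F (vertices w₁, v; countably
infinitely many edges from v to w₁) and G (vertices v, w₂; one edge from v to w₂)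
with both inclusions into F ∪ G admissible, while F ∩ G ↪ G is not admissible. -/
theorem stmt_16 :
    ∃ (V E : Type) (F G : SetGraph V E)
      (hs : ∀ e ∈ F.edges ∩ G.edges, F.s e = G.s e)
      (ht : ∀ e ∈ F.edges ∩ G.edges, F.t e = G.t e),
      (∃ v w₁ w₂ : V, w₁ ≠ v ∧ w₂ ≠ v ∧ w₁ ≠ w₂ ∧
        F.verts = {w₁, v} ∧ G.verts = {v, w₂} ∧
        F.edges.Infinite ∧ F.edges.Countable ∧
        (∀ e ∈ F.edges, F.s e = v ∧ F.t e = w₁) ∧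
        (∃ e₀ : E, G.edges = {e₀} ∧ G.s e₀ = v ∧ G.t e₀ = w₂)) ∧
      SetGraph.Admissible F (SetGraph.union F G) ∧
      SetGraph.Admissible G (SetGraph.union F G) ∧
      ¬ SetGraph.Admissible (SetGraph.inter F G hs ht) G := by
  refine ⟨ℕ, Option ℕ, graphF, graphG, fun _ _ => rfl, fun _ _ => rfl,
    ⟨0, 1, 2, by decide, by decide, by decide, rfl, rfl, ?_, Set.to_countable _, ?_, none, rfl,
      rfl, rfl⟩,
    admissible_graphF_union, admissible_graphG_union, not_admissible_inter_graphG⟩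
  · exact Set.infinite_range_of_injective (Option.some_injective ℕ)
  · rintro _ ⟨_, rfl⟩
    exact ⟨rfl, rfl⟩
end
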